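/- arXiv:1110.6692 — 3 statements merged into one kernel-verified Lean document; each statement's English description precedes it below -/
import Mathlib

section
/- For an overlapping masked IFS, the set Ω̄_q = Ω_q^+ ∪ Ω_q^- is the topological closure of Ω_q^+ and also the topological closure of Ω_q^- in the product space {0,1}^∞. -/
open Set Filter Topology

/-- Strict lexicographic order on binary strings. -/
def lexLt (σ ω : ℕ → Bool) : Prop :=
  ∃ k, (∀ j < k, σ j = ω j) ∧ σ k < ω k

/-- Lexicographic order on binary strings. -/
def lexLe (σ ω : ℕ → Bool) : Prop := lexLt σ ω ∨ σ = ω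

/-- n-fold shift. -/
def shiftn (n : ℕ) (ω : ℕ → Bool) : ℕ → Bool := fun k => ω (k + n)

/-- Plus dynamical system: boundary point goes to the 0-branch inverse `g1` side, i.e. `x ≥ q` uses `g1`. -/
noncomputable def Tplus (g0 g1 : ℝ → ℝ) (q : ℝ) (x : ℝ) : ℝ := if x < q then g0 x else g1 x

noncomputable def Tminus (g0 g1 : ℝ → ℝ) (q : ℝ) (x : ℝ) : ℝ := if x ≤ q then g0 x else g1 x

/-- Itinerary under the plus system. -/
noncomputable def tauPlus (g0 g1 : ℝ → ℝ) (q : ℝ) (x : ℝ) : ℕ → Bool :=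
  fun n => decide (q ≤ (Tplus g0 g1 q)^[n] x)

/-- Itinerary under the minus system. -/
noncomputable def tauMinus (g0 g1 : ℝ → ℝ) (q : ℝ) (x : ℝ) : ℕ → Bool :=
  fun n => decide (q < (Tminus g0 g1 q)^[n] x)

/-- Coding map of the uniform IFS with ratio `a`. -/
noncomputable def piU (a : ℝ) (ω : ℕ → Bool) : ℝ := (1 - a) * ∑' k : ℕ, (cond (ω k) (a ^ k) 0)

/-- `wordMap u0 u1 σ k = f_{σ|k} = f_{σ 0} ∘ ⋯ ∘ f_{σ k}`. -/
def wordMap (u0 u1 : ℝ → ℝ) (σ : ℕ → Bool) : ℕ → ℝ → ℝ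
  | 0 => cond (σ 0) u1 u0
  | (k+1) => fun x => wordMap u0 u1 σ k ((cond (σ (k+1)) u1 u0) x)

/-- Coding map of the IFS `(u0, u1)`. -/
noncomputable def piCode (u0 u1 : ℝ → ℝ) (σ : ℕ → Bool) : ℝ :=
  limUnder atTop (fun k => wordMap u0 u1 σ k 0)

/-- `h` is a homeomorphism of `[0,1]` onto itself. -/
def IsIccHomeo (h : ℝ → ℝ) : Prop :=
  ∃ h' : ℝ → ℝ, ContinuousOn h (Icc 0 1) ∧ ContinuousOn h' (Icc 0 1) ∧
    MapsTo h (Icc 0 1) (Icc 0 1) ∧ MapsTo h' (Icc 0 1) (Icc 0 1) ∧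
    (∀ x ∈ Icc (0:ℝ) 1, h' (h x) = x) ∧ (∀ y ∈ Icc (0:ℝ) 1, h (h' y) = y)

open scoped NNReal

/-!
The coding map `π` of the contracting IFS inverts both itineraries, so `Ω_q^+` and `Ω_q^-` are
the sequences `ω` with `ω n = [q ≤ π (σⁿ ω)]`, resp. `ω n = [q < π (σⁿ ω)]`, for all `n`. As `π`
is continuous, a limit `ω` of such sequences still satisfies `ω n = 1 → q ≤ π (σⁿ ω)` and
`ω n = 0 → π (σⁿ ω) ≤ q`. If `ω` lay in neither set, it would read `0` at some `n` and `1` at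
some `m` with `π (σⁿ ω) = π (σᵐ ω) = q`; an approximant sharing the digits up to `max n m`
follows the same increasing branches between `n` and `m`, which forces its orbit to sit at `q`
at both times, where it reads a single digit. Conversely `τ⁻(x) = lim_{y ↑ x} τ⁺(y)` and
`τ⁺(x) = lim_{y ↓ x} τ⁻(y)`: on the appropriate side of `x`, `T_q^±` uses the branch inverse
that `T_q^∓` uses at `x`, and that inverse is one-sidedly continuous there.
-/
theorem tendsto_nhdsLT_of_leftInvOn {f g : ℝ → ℝ} {a b s : ℝ} (hf : StrictMonoOn f (Icc a b))
    (hfc : ContinuousOn f (Icc a b)) (hg : LeftInvOn g f (Icc a b)) (hs : s ∈ Ioc a b) :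
    Tendsto g (𝓝[<] (f s)) (𝓝[<] s) := by
  refine (nhdsLT_basis s).tendsto_right_iff.2 fun i hi => ?_
  set i' := max i a
  have hi's : i' < s := max_lt hi hs.1
  have hsub : Icc i' s ⊆ Icc a b := Icc_subset_Icc (le_max_right _ _) hs.2
  filter_upwards [Ioo_mem_nhdsLT (hf (hsub ⟨le_rfl, hi's.le⟩) (hsub ⟨hi's.le, le_rfl⟩) hi's)]
    with y hy
  obtain ⟨z, hz, rfl⟩ := intermediate_value_Ioo hi's.le (hfc.mono hsub) hy
  rw [hg (hsub (Ioo_subset_Icc_self hz))]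
  exact ⟨(le_max_left _ _).trans_lt hz.1, hz.2⟩

theorem tendsto_nhdsGT_of_leftInvOn {f g : ℝ → ℝ} {a b s : ℝ} (hf : StrictMonoOn f (Icc a b))
    (hfc : ContinuousOn f (Icc a b)) (hg : LeftInvOn g f (Icc a b)) (hs : s ∈ Ico a b) :
    Tendsto g (𝓝[>] (f s)) (𝓝[>] s) := by
  refine (nhdsGT_basis s).tendsto_right_iff.2 fun i hi => ?_
  set i' := min i b
  have hsi' : s < i' := lt_min hi hs.2
  have hsub : Icc s i' ⊆ Icc a b := Icc_subset_Icc hs.1 (min_le_right _ _)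
  filter_upwards [Ioo_mem_nhdsGT (hf (hsub ⟨le_rfl, hsi'.le⟩) (hsub ⟨hsi'.le, le_rfl⟩) hsi')]
    with y hy
  obtain ⟨z, hz, rfl⟩ := intermediate_value_Ioo hsi'.le (hfc.mono hsub) hy
  rw [hg (hsub (Ioo_subset_Icc_self hz))]
  exact ⟨hz.1, hz.2.trans_le (min_le_left _ _)⟩

theorem eventually_nhds_forall_le_apply_eq {α : Type*} [TopologicalSpace α] [DiscreteTopology α]
    (ω : ℕ → α) (N : ℕ) : ∀ᶠ σ in 𝓝 ω, ∀ i ≤ N, σ i = ω i :=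
  (finite_Iic N).eventually_all.2 fun i _ =>
    tendsto_pure.1 (nhds_discrete α ▸ (continuous_apply i).tendsto ω)

theorem exists_mem_forall_le_eq_of_mem_closure {α : Type*} [TopologicalSpace α]
    [DiscreteTopology α] {s : Set (ℕ → α)} {ω : ℕ → α} (h : ω ∈ closure s) (N : ℕ) :
    ∃ σ ∈ s, ∀ i ≤ N, σ i = ω i := by
  obtain ⟨σ, hσ, hσs⟩ := ((eventually_nhds_forall_le_apply_eq ω N).and_frequently
    (mem_closure_iff_frequently.1 h)).exists
  exact ⟨σ, hσs, hσ⟩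

section Coding

structure IsContractingIFS (f0 f1 : ℝ → ℝ) (K : ℝ≥0) : Prop where
  lt_one : K < 1
  mapsTo : ∀ b, MapsTo (cond b f1 f0) (Icc 0 1) (Icc 0 1)
  lipschitzOnWith : ∀ b, LipschitzOnWith K (cond b f1 f0) (Icc 0 1)

theorem wordMap_congr (u0 u1 : ℝ → ℝ) {σ σ' : ℕ → Bool} {k : ℕ} (h : ∀ i ≤ k, σ i = σ' i) :
    wordMap u0 u1 σ k = wordMap u0 u1 σ' k := by
  induction k with
  | zero => simp [wordMap, h 0 le_rfl]
  | succ k ih =>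
    funext x
    simp only [wordMap, h (k + 1) le_rfl, ih fun i hi => h i (hi.trans k.le_succ)]

theorem wordMap_succ_eq_cond (u0 u1 : ℝ → ℝ) (σ : ℕ → Bool) (k : ℕ) (x : ℝ) :
    wordMap u0 u1 σ (k + 1) x = cond (σ 0) u1 u0 (wordMap u0 u1 (shiftn 1 σ) k x) := by
  induction k generalizing x with
  | zero => rfl
  | succ k ih => exact ih _

theorem shiftn_shiftn (m n : ℕ) (σ : ℕ → Bool) : shiftn m (shiftn n σ) = shiftn (m + n) σ := by
  funext k
  simp [shiftn, Nat.add_assoc]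

variable {f0 f1 : ℝ → ℝ} {K : ℝ≥0}

namespace IsContractingIFS

variable (hF : IsContractingIFS f0 f1 K)
include hF

theorem mapsTo_wordMap (σ : ℕ → Bool) (k : ℕ) :
    MapsTo (wordMap f0 f1 σ k) (Icc 0 1) (Icc 0 1) := by
  induction k with
  | zero => exact hF.mapsTo (σ 0)
  | succ k ih => exact ih.comp (hF.mapsTo _)

theorem lipschitzOnWith_wordMap (σ : ℕ → Bool) (k : ℕ) :
    LipschitzOnWith (K ^ (k + 1)) (wordMap f0 f1 σ k) (Icc 0 1) := by
  induction k with
  | zero => simpa [wordMap] using hF.lipschitzOnWith (σ 0)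
  | succ k ih =>
    rw [pow_succ]
    exact ih.comp (hF.lipschitzOnWith _) (hF.mapsTo _)

theorem dist_wordMap_le (σ : ℕ → Bool) (k : ℕ) {x y : ℝ} (hx : x ∈ Icc (0 : ℝ) 1)
    (hy : y ∈ Icc (0 : ℝ) 1) : dist (wordMap f0 f1 σ k x) (wordMap f0 f1 σ k y) ≤ K ^ (k + 1) := by
  have hxy : dist x y ≤ 1 := by
    rw [Real.dist_eq, abs_le]
    constructor <;> linarith [hx.1, hx.2, hy.1, hy.2]
  calc dist (wordMap f0 f1 σ k x) (wordMap f0 f1 σ k y)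
      ≤ ↑(K ^ (k + 1)) * dist x y := (hF.lipschitzOnWith_wordMap σ k).dist_le_mul x hx y hy
    _ ≤ K ^ (k + 1) := by push_cast; exact mul_le_of_le_one_right (by positivity) hxy

theorem dist_wordMap_succ_le (σ : ℕ → Bool) (k : ℕ) :
    dist (wordMap f0 f1 σ k 0) (wordMap f0 f1 σ (k + 1) 0) ≤ K * K ^ k := by
  rw [← pow_succ']
  exact hF.dist_wordMap_le σ k (by simp) (hF.mapsTo _ (by simp))

theorem tendsto_wordMap_piCode (σ : ℕ → Bool) :
    Tendsto (fun k => wordMap f0 f1 σ k 0) atTop (𝓝 (piCode f0 f1 σ)) := by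
  obtain ⟨l, hl⟩ := cauchySeq_tendsto_of_complete
    (cauchySeq_of_le_geometric _ _ hF.lt_one (hF.dist_wordMap_succ_le σ))
  rwa [piCode, hl.limUnder_eq]

theorem dist_wordMap_piCode_le (σ : ℕ → Bool) (k : ℕ) :
    dist (wordMap f0 f1 σ k 0) (piCode f0 f1 σ) ≤ K * K ^ k / (1 - K) :=
  dist_le_of_le_geometric_of_tendsto _ _ hF.lt_one (hF.dist_wordMap_succ_le σ)
    (hF.tendsto_wordMap_piCode σ) k

theorem piCode_mem_Icc (σ : ℕ → Bool) : piCode f0 f1 σ ∈ Icc (0 : ℝ) 1 :=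
  isClosed_Icc.mem_of_tendsto (hF.tendsto_wordMap_piCode σ)
    (Eventually.of_forall fun k => hF.mapsTo_wordMap σ k (by simp))

theorem piCode_eq_of_wordMap_eq {σ : ℕ → Bool} {x : ℝ} {z : ℕ → ℝ}
    (hz : ∀ k, z k ∈ Icc (0 : ℝ) 1) (hx : ∀ k, wordMap f0 f1 σ k (z k) = x) :
    piCode f0 f1 σ = x := by
  refine tendsto_nhds_unique (hF.tendsto_wordMap_piCode σ) ?_
  have hK : Tendsto (fun k : ℕ => (K : ℝ) ^ (k + 1)) atTop (𝓝 0) :=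
    (tendsto_pow_atTop_nhds_zero_of_lt_one K.2 hF.lt_one).comp (tendsto_add_atTop_nat 1)
  refine tendsto_iff_dist_tendsto_zero.2 (squeeze_zero (fun _ => dist_nonneg) (fun k => ?_) hK)
  rw [← hx k]
  exact_mod_cast hF.dist_wordMap_le σ k (by simp) (hz k)

theorem piCode_shiftn_eq_cond (σ : ℕ → Bool) (n : ℕ) :
    piCode f0 f1 (shiftn n σ) = cond (σ n) f1 f0 (piCode f0 f1 (shiftn (n + 1) σ)) := by
  have hlim := (hF.tendsto_wordMap_piCode (shiftn n σ)).comp (tendsto_add_atTop_nat 1)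
  have hcont := ((hF.lipschitzOnWith (σ n)).continuousOn _ (hF.piCode_mem_Icc _)).tendsto.comp
    (tendsto_nhdsWithin_iff.2 ⟨hF.tendsto_wordMap_piCode (shiftn (n + 1) σ),
      Eventually.of_forall fun k => hF.mapsTo_wordMap _ k (by simp)⟩)
  refine tendsto_nhds_unique hlim (hcont.congr fun k => ?_)
  simp [wordMap_succ_eq_cond, shiftn_shiftn, Nat.add_comm 1 n, shiftn]

theorem continuous_piCode : Continuous (piCode f0 f1) := by
  refine TendstoUniformly.continuous (F := fun (k : ℕ) σ => wordMap f0 f1 σ k 0) (p := atTop)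
    (Metric.tendstoUniformly_iff.2 fun ε hε => ?_)
    (Frequently.of_forall fun k => continuous_iff_continuousAt.2 fun σ => ?_)
  · have hlim : Tendsto (fun k : ℕ => K * K ^ k / (1 - K) : ℕ → ℝ) atTop (𝓝 0) := by
      simpa using ((tendsto_pow_atTop_nhds_zero_of_lt_one K.2 hF.lt_one).const_mul
        (K : ℝ)).div_const (1 - (K : ℝ))
    filter_upwards [hlim.eventually (gt_mem_nhds hε)] with k hk σ
    rw [dist_comm]
    exact (hF.dist_wordMap_piCode_le σ k).trans_lt hk
  · refine tendsto_nhds_of_eventually_eq ?_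
    filter_upwards [eventually_nhds_forall_le_apply_eq σ k] with σ' hσ'
    rw [wordMap_congr f0 f1 hσ']

end IsContractingIFS

end Coding

section Mask

def AllowedDigit (q x : ℝ) : Bool → Prop
  | true => q ≤ x
  | false => x ≤ q

def IsMask (q : ℝ) (D : ℝ → Bool) : Prop := ∀ x, AllowedDigit q x (D x)

def maskMap (g0 g1 : ℝ → ℝ) (D : ℝ → Bool) (x : ℝ) : ℝ := cond (D x) g1 g0 x

def maskItinerary (g0 g1 : ℝ → ℝ) (D : ℝ → Bool) (x : ℝ) : ℕ → Bool :=
  fun n => D ((maskMap g0 g1 D)^[n] x)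

theorem isMask_decide_le (q : ℝ) : IsMask q fun x => decide (q ≤ x) := by
  intro x
  by_cases h : q ≤ x
  · simp [AllowedDigit, h]
  · simp [AllowedDigit, h, (not_le.1 h).le]

theorem isMask_decide_lt (q : ℝ) : IsMask q fun x => decide (q < x) := by
  intro x
  by_cases h : q < x
  · simp [AllowedDigit, h, h.le]
  · simp [AllowedDigit, h, not_lt.1 h]

variable {g0 g1 : ℝ → ℝ} {q : ℝ}

theorem Tplus_eq_maskMap : Tplus g0 g1 q = maskMap g0 g1 fun x => decide (q ≤ x) := by
  funext x
  by_cases h : x < q <;> simp [Tplus, maskMap, h, not_le.2, le_of_not_gt]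

theorem Tminus_eq_maskMap : Tminus g0 g1 q = maskMap g0 g1 fun x => decide (q < x) := by
  funext x
  by_cases h : x ≤ q <;> simp [Tminus, maskMap, h, not_lt.2, lt_of_not_ge]

theorem tauPlus_eq_maskItinerary :
    tauPlus g0 g1 q = maskItinerary g0 g1 fun x => decide (q ≤ x) := by
  funext x n
  simp only [tauPlus, maskItinerary, Tplus_eq_maskMap]

theorem tauMinus_eq_maskItinerary :
    tauMinus g0 g1 q = maskItinerary g0 g1 fun x => decide (q < x) := by
  funext x n
  simp only [tauMinus, maskItinerary, Tminus_eq_maskMap]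

theorem shiftn_maskItinerary (D : ℝ → Bool) (x : ℝ) (n : ℕ) :
    shiftn n (maskItinerary g0 g1 D x) = maskItinerary g0 g1 D ((maskMap g0 g1 D)^[n] x) := by
  funext k
  simp only [shiftn, maskItinerary, Function.iterate_add_apply]

theorem isClosed_setOf_allowedDigit {X : Type*} [TopologicalSpace X] {F : X → ℝ} {d : X → Bool}
    (hF : Continuous F) (hd : Continuous d) (q : ℝ) :
    IsClosed {x | AllowedDigit q (F x) (d x)} := by
  have hset : {x | AllowedDigit q (F x) (d x)} =
      (d ⁻¹' {true} ∩ {x | q ≤ F x}) ∪ (d ⁻¹' {false} ∩ {x | F x ≤ q}) := by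
    ext x
    cases h : d x <;> simp [AllowedDigit, h]
  rw [hset]
  exact (((isClosed_discrete _).preimage hd).inter (isClosed_le continuous_const hF)).union
    (((isClosed_discrete _).preimage hd).inter (isClosed_le hF continuous_const))

theorem AllowedDigit.eq_decide_le_or {q x : ℝ} {b : Bool} (h : AllowedDigit q x b) :
    b = decide (q ≤ x) ∨ (b = false ∧ x = q) := by
  cases b
  · rcases (show x ≤ q from h).lt_or_eq with hlt | heq
    · simp [not_le.2 hlt]
    · simp [heq]
  · simp [show q ≤ x from h]

theorem AllowedDigit.eq_decide_lt_or {q x : ℝ} {b : Bool} (h : AllowedDigit q x b) :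
    b = decide (q < x) ∨ (b = true ∧ x = q) := by
  cases b
  · simp [show x ≤ q from h]
  · rcases (show q ≤ x from h).lt_or_eq with hlt | heq
    · simp [hlt]
    · simp [heq]

end Mask

structure IsMaskedIFS (f0 f1 g0 g1 : ℝ → ℝ) (q : ℝ) : Prop where
  strictMonoOn : ∀ b, StrictMonoOn (cond b f1 f0) (Icc 0 1)
  continuousOn : ∀ b, ContinuousOn (cond b f1 f0) (Icc 0 1)
  mapsTo : ∀ b, MapsTo (cond b f1 f0) (Icc 0 1) (Icc 0 1)
  leftInvOn : ∀ b, LeftInvOn (cond b g1 g0) (cond b f1 f0) (Icc 0 1)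
  f0_zero : f0 0 = 0
  f1_one : f1 1 = 1
  f1_zero_lt : f1 0 < q
  lt_f0_one : q < f0 1

namespace IsMaskedIFS

variable {f0 f1 g0 g1 : ℝ → ℝ} {q : ℝ} {D : ℝ → Bool} (H : IsMaskedIFS f0 f1 g0 g1 q)
include H

theorem q_pos : 0 < q := (H.mapsTo true ⟨le_rfl, zero_le_one⟩).1.trans_lt H.f1_zero_lt

theorem q_lt_one : q < 1 := H.lt_f0_one.trans_le (H.mapsTo false ⟨zero_le_one, le_rfl⟩).2

theorem mem_image_of_allowedDigit {x : ℝ} (hx : x ∈ Icc (0 : ℝ) 1) {b : Bool}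
    (hb : AllowedDigit q x b) : x ∈ cond b f1 f0 '' Icc 0 1 := by
  cases b
  · refine intermediate_value_Icc zero_le_one (H.continuousOn false) ⟨?_, ?_⟩
    · simpa [H.f0_zero] using hx.1
    · exact (show x ≤ q from hb).trans H.lt_f0_one.le
  · refine intermediate_value_Icc zero_le_one (H.continuousOn true) ⟨?_, ?_⟩
    · exact H.f1_zero_lt.le.trans (show q ≤ x from hb)
    · simpa [H.f1_one] using hx.2

theorem maskMap_mem_and_cond_apply (hD : IsMask q D) {x : ℝ} (hx : x ∈ Icc (0 : ℝ) 1) :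
    maskMap g0 g1 D x ∈ Icc (0 : ℝ) 1 ∧ cond (D x) f1 f0 (maskMap g0 g1 D x) = x := by
  obtain ⟨s, hs, hsx⟩ := H.mem_image_of_allowedDigit hx (hD x)
  have hmap : maskMap g0 g1 D x = s := by
    have := H.leftInvOn (D x) hs
    rwa [hsx] at this
  exact ⟨hmap ▸ hs, hmap ▸ hsx⟩

theorem mapsTo_maskMap (hD : IsMask q D) : MapsTo (maskMap g0 g1 D) (Icc 0 1) (Icc 0 1) :=
  fun _ hx => (H.maskMap_mem_and_cond_apply hD hx).1

theorem tauMinus_zero : tauMinus g0 g1 q 0 = tauPlus g0 g1 q 0 := by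
  have hg0 : g0 0 = 0 := by simpa [H.f0_zero] using H.leftInvOn false ⟨le_rfl, zero_le_one⟩
  have hplus : Tplus g0 g1 q 0 = 0 := by simp [Tplus, H.q_pos, hg0]
  have hminus : Tminus g0 g1 q 0 = 0 := by simp [Tminus, H.q_pos.le, hg0]
  funext n
  simp [tauPlus, tauMinus, Function.iterate_fixed hplus, Function.iterate_fixed hminus,
    not_lt.2 H.q_pos.le, not_le.2 H.q_pos]

theorem tauPlus_one : tauPlus g0 g1 q 1 = tauMinus g0 g1 q 1 := by
  have hg1 : g1 1 = 1 := by simpa [H.f1_one] using H.leftInvOn true ⟨zero_le_one, le_rfl⟩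
  have hplus : Tplus g0 g1 q 1 = 1 := by simp [Tplus, H.q_lt_one.le, hg1]
  have hminus : Tminus g0 g1 q 1 = 1 := by simp [Tminus, H.q_lt_one, hg1]
  funext n
  simp [tauPlus, tauMinus, Function.iterate_fixed hplus, Function.iterate_fixed hminus,
    H.q_lt_one, H.q_lt_one.le]

theorem Tminus_mem_Ioc {x : ℝ} (hx : x ∈ Ioc (0 : ℝ) 1) : Tminus g0 g1 q x ∈ Ioc (0 : ℝ) 1 := by
  obtain ⟨hmem, hcond⟩ := H.maskMap_mem_and_cond_apply (isMask_decide_lt q) (Ioc_subset_Icc_self hx)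
  rw [← Tminus_eq_maskMap] at hmem hcond
  refine ⟨hmem.1.lt_of_ne fun h0 => ?_, hmem.2⟩
  rw [← h0] at hcond
  by_cases hqx : q < x
  · simp only [hqx, decide_true, cond_true] at hcond
    linarith [H.f1_zero_lt]
  · simp only [hqx, decide_false, cond_false, H.f0_zero] at hcond
    linarith [hx.1]

theorem Tplus_mem_Ico {x : ℝ} (hx : x ∈ Ico (0 : ℝ) 1) : Tplus g0 g1 q x ∈ Ico (0 : ℝ) 1 := by
  obtain ⟨hmem, hcond⟩ := H.maskMap_mem_and_cond_apply (isMask_decide_le q) (Ico_subset_Icc_self hx)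
  rw [← Tplus_eq_maskMap] at hmem hcond
  refine ⟨hmem.1, hmem.2.lt_of_ne fun h1 => ?_⟩
  rw [h1] at hcond
  by_cases hqx : q ≤ x
  · simp only [hqx, decide_true, cond_true, H.f1_one] at hcond
    linarith [hx.2]
  · simp only [hqx, decide_false, cond_false] at hcond
    linarith [H.lt_f0_one]

theorem tendsto_Tplus_nhdsLT {x : ℝ} (hx : x ∈ Ioc (0 : ℝ) 1) :
    Tendsto (Tplus g0 g1 q) (𝓝[<] x) (𝓝[<] (Tminus g0 g1 q x)) := by
  have hcond : cond (decide (q < x)) f1 f0 (Tminus g0 g1 q x) = x := by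
    rw [Tminus_eq_maskMap]
    exact (H.maskMap_mem_and_cond_apply (isMask_decide_lt q) (Ioc_subset_Icc_self hx)).2
  have hlim := tendsto_nhdsLT_of_leftInvOn (H.strictMonoOn (decide (q < x)))
    (H.continuousOn _) (H.leftInvOn _) (H.Tminus_mem_Ioc hx)
  rw [hcond] at hlim
  refine hlim.congr' ?_
  by_cases hqx : q < x
  · filter_upwards [Ioo_mem_nhdsLT hqx] with y hy
    simp [Tplus, hqx, not_lt.2 hy.1.le]
  · filter_upwards [self_mem_nhdsWithin] with y (hy : y < x)
    simp [Tplus, hqx, hy.trans_le (not_lt.1 hqx)]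

theorem tendsto_Tminus_nhdsGT {x : ℝ} (hx : x ∈ Ico (0 : ℝ) 1) :
    Tendsto (Tminus g0 g1 q) (𝓝[>] x) (𝓝[>] (Tplus g0 g1 q x)) := by
  have hcond : cond (decide (q ≤ x)) f1 f0 (Tplus g0 g1 q x) = x := by
    rw [Tplus_eq_maskMap]
    exact (H.maskMap_mem_and_cond_apply (isMask_decide_le q) (Ico_subset_Icc_self hx)).2
  have hlim := tendsto_nhdsGT_of_leftInvOn (H.strictMonoOn (decide (q ≤ x)))
    (H.continuousOn _) (H.leftInvOn _) (H.Tplus_mem_Ico hx)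
  rw [hcond] at hlim
  refine hlim.congr' ?_
  by_cases hqx : q ≤ x
  · filter_upwards [self_mem_nhdsWithin] with y (hy : x < y)
    simp [Tminus, hqx, not_le.2 (hqx.trans_lt hy)]
  · filter_upwards [Ioo_mem_nhdsGT (not_le.1 hqx)] with y hy
    simp [Tminus, hqx, hy.2.le]

theorem tendsto_tauPlus_nhdsLT {x : ℝ} (hx : x ∈ Ioc (0 : ℝ) 1) :
    Tendsto (tauPlus g0 g1 q) (𝓝[<] x) (𝓝 (tauMinus g0 g1 q x)) := by
  refine tendsto_pi_nhds.2 fun n => ?_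
  rw [nhds_discrete, tendsto_pure]
  induction n generalizing x with
  | zero =>
    by_cases hqx : q < x
    · filter_upwards [Ioo_mem_nhdsLT hqx] with y hy
      simp [tauPlus, tauMinus, hqx, hy.1.le]
    · filter_upwards [self_mem_nhdsWithin] with y (hy : y < x)
      simp [tauPlus, tauMinus, hqx, not_le.2 (hy.trans_le (not_lt.1 hqx))]
  | succ n ih =>
    exact (H.tendsto_Tplus_nhdsLT hx).eventually (ih (H.Tminus_mem_Ioc hx))

theorem tendsto_tauMinus_nhdsGT {x : ℝ} (hx : x ∈ Ico (0 : ℝ) 1) :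
    Tendsto (tauMinus g0 g1 q) (𝓝[>] x) (𝓝 (tauPlus g0 g1 q x)) := by
  refine tendsto_pi_nhds.2 fun n => ?_
  rw [nhds_discrete, tendsto_pure]
  induction n generalizing x with
  | zero =>
    by_cases hqx : q ≤ x
    · filter_upwards [self_mem_nhdsWithin] with y (hy : x < y)
      simp [tauPlus, tauMinus, hqx, hqx.trans_lt hy]
    · filter_upwards [Ioo_mem_nhdsGT (not_le.1 hqx)] with y hy
      simp [tauPlus, tauMinus, hqx, not_lt.2 hy.2.le]
  | succ n ih =>
    exact (H.tendsto_Tminus_nhdsGT hx).eventually (ih (H.Tplus_mem_Ico hx))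

theorem image_tauMinus_subset_closure :
    tauMinus g0 g1 q '' Icc 0 1 ⊆ closure (tauPlus g0 g1 q '' Icc 0 1) := by
  rintro _ ⟨x, hx, rfl⟩
  rcases hx.1.eq_or_lt with rfl | hx0
  · rw [H.tauMinus_zero]
    exact subset_closure ⟨0, hx, rfl⟩
  · refine mem_closure_of_tendsto (H.tendsto_tauPlus_nhdsLT ⟨hx0, hx.2⟩) ?_
    filter_upwards [Ioo_mem_nhdsLT hx0] with y hy using ⟨y, ⟨hy.1.le, hy.2.le.trans hx.2⟩, rfl⟩

theorem image_tauPlus_subset_closure :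
    tauPlus g0 g1 q '' Icc 0 1 ⊆ closure (tauMinus g0 g1 q '' Icc 0 1) := by
  rintro _ ⟨x, hx, rfl⟩
  rcases hx.2.eq_or_lt with rfl | hx1
  · rw [H.tauPlus_one]
    exact subset_closure ⟨1, hx, rfl⟩
  · refine mem_closure_of_tendsto (H.tendsto_tauMinus_nhdsGT ⟨hx.1, hx1⟩) ?_
    filter_upwards [Ioo_mem_nhdsGT hx1] with y hy using ⟨y, ⟨hx.1.trans hy.1.le, hy.2.le⟩, rfl⟩

variable {K : ℝ≥0} (hF : IsContractingIFS f0 f1 K)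

theorem wordMap_maskItinerary (hD : IsMask q D) {x : ℝ} (hx : x ∈ Icc (0 : ℝ) 1) (k : ℕ) :
    wordMap f0 f1 (maskItinerary g0 g1 D x) k ((maskMap g0 g1 D)^[k + 1] x) = x := by
  induction k with
  | zero => exact (H.maskMap_mem_and_cond_apply hD hx).2
  | succ k ih =>
    have hy := (H.mapsTo_maskMap hD).iterate (k + 1) hx
    calc wordMap f0 f1 (maskItinerary g0 g1 D x) (k + 1) ((maskMap g0 g1 D)^[k + 2] x)
        = wordMap f0 f1 (maskItinerary g0 g1 D x) k (cond (D ((maskMap g0 g1 D)^[k + 1] x)) f1 f0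
            (maskMap g0 g1 D ((maskMap g0 g1 D)^[k + 1] x))) := by
          rw [Function.iterate_succ_apply' _ (k + 1)]
          rfl
      _ = x := by rw [(H.maskMap_mem_and_cond_apply hD hy).2, ih]

include hF

theorem piCode_maskItinerary (hD : IsMask q D) {x : ℝ} (hx : x ∈ Icc (0 : ℝ) 1) :
    piCode f0 f1 (maskItinerary g0 g1 D x) = x :=
  hF.piCode_eq_of_wordMap_eq (fun k => (H.mapsTo_maskMap hD).iterate (k + 1) hx)
    (H.wordMap_maskItinerary hD hx)

theorem mem_image_maskItinerary_iff (hD : IsMask q D) {ω : ℕ → Bool} :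
    ω ∈ maskItinerary g0 g1 D '' Icc 0 1 ↔ ∀ n, ω n = D (piCode f0 f1 (shiftn n ω)) := by
  constructor
  · rintro ⟨x, hx, rfl⟩ n
    rw [shiftn_maskItinerary, H.piCode_maskItinerary hF hD ((H.mapsTo_maskMap hD).iterate n hx)]
    rfl
  · intro hω
    have horbit : ∀ n, (maskMap g0 g1 D)^[n] (piCode f0 f1 ω) = piCode f0 f1 (shiftn n ω) := by
      intro n
      induction n with
      | zero => rfl
      | succ n ih =>
        rw [Function.iterate_succ_apply', ih, maskMap, ← hω n, hF.piCode_shiftn_eq_cond ω n]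
        exact H.leftInvOn (ω n) (hF.piCode_mem_Icc _)
    refine ⟨piCode f0 f1 ω, hF.piCode_mem_Icc ω, funext fun n => ?_⟩
    rw [maskItinerary, horbit, ← hω n]

theorem piCode_shiftn_le_iff {ω ω' : ℕ → Bool} {n N : ℕ} (hnN : n ≤ N)
    (h : ∀ j, n ≤ j → j < N → ω j = ω' j) :
    piCode f0 f1 (shiftn n ω) ≤ piCode f0 f1 (shiftn n ω') ↔
      piCode f0 f1 (shiftn N ω) ≤ piCode f0 f1 (shiftn N ω') := by
  induction N, hnN using Nat.le_induction with
  | base => rfl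
  | succ N hnN ih =>
    rw [ih fun j hj hjN => h j hj (hjN.trans N.lt_succ_self), hF.piCode_shiftn_eq_cond ω N,
      hF.piCode_shiftn_eq_cond ω' N, h N hnN N.lt_succ_self]
    exact (H.strictMonoOn _).le_iff_le (hF.piCode_mem_Icc _) (hF.piCode_mem_Icc _)

theorem allowedDigit_of_mem_closure (hD : IsMask q D) {ω : ℕ → Bool}
    (hω : ω ∈ closure (maskItinerary g0 g1 D '' Icc 0 1)) (n : ℕ) :
    AllowedDigit q (piCode f0 f1 (shiftn n ω)) (ω n) := by
  have hclosed :
      IsClosed {ω : ℕ → Bool | ∀ n, AllowedDigit q (piCode f0 f1 (shiftn n ω)) (ω n)} := by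
    simp only [ofPred_forall]
    exact isClosed_iInter fun n => isClosed_setOf_allowedDigit
      (hF.continuous_piCode.comp (continuous_pi fun k => continuous_apply _))
      (continuous_apply n) q
  refine closure_minimal (fun ω' hω' n => ?_) hclosed hω n
  rw [(H.mem_image_maskItinerary_iff hF hD).1 hω' n]
  exact hD _

theorem closure_image_maskItinerary_subset (hD : IsMask q D) :
    closure (maskItinerary g0 g1 D '' Icc 0 1) ⊆
      tauPlus g0 g1 q '' Icc 0 1 ∪ tauMinus g0 g1 q '' Icc 0 1 := by
  intro ω hω
  have hallowed := H.allowedDigit_of_mem_closure hF hD hω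
  rw [tauPlus_eq_maskItinerary, tauMinus_eq_maskItinerary, mem_union,
    H.mem_image_maskItinerary_iff hF (isMask_decide_le q),
    H.mem_image_maskItinerary_iff hF (isMask_decide_lt q)]
  by_contra! hnot
  obtain ⟨⟨n, hn⟩, ⟨m, hm⟩⟩ := hnot
  obtain ⟨hn0, hnq⟩ := (hallowed n).eq_decide_le_or.resolve_left hn
  obtain ⟨hm1, hmq⟩ := (hallowed m).eq_decide_lt_or.resolve_left hm
  obtain ⟨ω', hω', hagree⟩ := exists_mem_forall_le_eq_of_mem_closure hω (max n m)
  have hdigit := (H.mem_image_maskItinerary_iff hF hD).1 hω'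
  have htransfer : ∀ {σ τ : ℕ → Bool}, (∀ j ≤ max n m, σ j = τ j) →
      (piCode f0 f1 (shiftn n σ) ≤ piCode f0 f1 (shiftn n τ) ↔
        piCode f0 f1 (shiftn m σ) ≤ piCode f0 f1 (shiftn m τ)) := fun h =>
    (H.piCode_shiftn_le_iff hF (le_max_left n m) fun j _ hj => h j hj.le).trans
      (H.piCode_shiftn_le_iff hF (le_max_right n m) fun j _ hj => h j hj.le).symm
  have hn' : piCode f0 f1 (shiftn n ω') ≤ q := by
    have := hD (piCode f0 f1 (shiftn n ω'))
    rwa [← hdigit n, hagree n (le_max_left n m), hn0] at this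
  have hm' : q ≤ piCode f0 f1 (shiftn m ω') := by
    have := hD (piCode f0 f1 (shiftn m ω'))
    rwa [← hdigit m, hagree m (le_max_right n m), hm1] at this
  have hm'' : piCode f0 f1 (shiftn m ω') = q :=
    le_antisymm (hmq ▸ (htransfer hagree).1 (hnq ▸ hn')) hm'
  have hn'' : piCode f0 f1 (shiftn n ω') = q :=
    le_antisymm hn' (hnq ▸ (htransfer fun j hj => (hagree j hj).symm).2 (hmq ▸ hm'))
  have hsame := hdigit n
  rw [hn'', ← hm'', ← hdigit m, hagree n (le_max_left n m), hagree m (le_max_right n m), hn0,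
    hm1] at hsame
  exact Bool.false_ne_true hsame

end IsMaskedIFS

theorem stmt7_general
    (f0 f1 g0 g1 : ℝ → ℝ) (q : ℝ)
    (hf0m : StrictMonoOn f0 (Icc 0 1)) (hf1m : StrictMonoOn f1 (Icc 0 1))
    (hf0c : ContinuousOn f0 (Icc 0 1)) (hf1c : ContinuousOn f1 (Icc 0 1))
    (hf0map : MapsTo f0 (Icc 0 1) (Icc 0 1)) (hf1map : MapsTo f1 (Icc 0 1) (Icc 0 1))
    (hf0lip : ∃ c, 0 ≤ c ∧ c < 1 ∧ ∀ x ∈ Icc (0:ℝ) 1, ∀ y ∈ Icc (0:ℝ) 1, |f0 x - f0 y| ≤ c * |x - y|)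
    (hf1lip : ∃ c, 0 ≤ c ∧ c < 1 ∧ ∀ x ∈ Icc (0:ℝ) 1, ∀ y ∈ Icc (0:ℝ) 1, |f1 x - f1 y| ≤ c * |x - y|)
    (hf00 : f0 0 = 0) (hf11 : f1 1 = 1)
    (hq : q ∈ Ioo (f1 0) (f0 1))
    (hg0 : ∀ x ∈ Icc (0:ℝ) 1, g0 (f0 x) = x) (hg1 : ∀ x ∈ Icc (0:ℝ) 1, g1 (f1 x) = x) :
    closure (tauPlus g0 g1 q '' (Icc 0 1)) =
      tauPlus g0 g1 q '' (Icc 0 1) ∪ tauMinus g0 g1 q '' (Icc 0 1) ∧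
    closure (tauMinus g0 g1 q '' (Icc 0 1)) =
      tauPlus g0 g1 q '' (Icc 0 1) ∪ tauMinus g0 g1 q '' (Icc 0 1) := by
  obtain ⟨c0, -, hc0, hlip0⟩ := hf0lip
  obtain ⟨c1, -, hc1, hlip1⟩ := hf1lip
  have H : IsMaskedIFS f0 f1 g0 g1 q :=
    { strictMonoOn := fun b => by cases b <;> assumption
      continuousOn := fun b => by cases b <;> assumption
      mapsTo := fun b => by cases b <;> assumption
      leftInvOn := fun b => by cases b <;> assumption
      f0_zero := hf00, f1_one := hf11, f1_zero_lt := hq.1, lt_f0_one := hq.2 }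
  have hF : IsContractingIFS f0 f1 (max c0 c1).toNNReal := by
    refine ⟨Real.toNNReal_lt_one.2 (max_lt hc0 hc1), H.mapsTo, fun b => ?_⟩
    refine LipschitzOnWith.of_dist_le' fun x hx y hy => ?_
    simp only [Real.dist_eq]
    cases b
    · exact (hlip0 x hx y hy).trans (by gcongr; exact le_max_left _ _)
    · exact (hlip1 x hx y hy).trans (by gcongr; exact le_max_right _ _)
  have hplus := H.closure_image_maskItinerary_subset hF (isMask_decide_le q)
  have hminus := H.closure_image_maskItinerary_subset hF (isMask_decide_lt q)
  rw [← tauPlus_eq_maskItinerary] at hplus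
  rw [← tauMinus_eq_maskItinerary] at hminus
  exact ⟨hplus.antisymm (union_subset subset_closure H.image_tauMinus_subset_closure),
    hminus.antisymm (union_subset H.image_tauPlus_subset_closure subset_closure)⟩

/-- `Ω̄_q = Ω_q^+ ∪ Ω_q^-` is the closure of each of `Ω_q^+`, `Ω_q^-` in the
product topology on `{0,1}^∞`. -/
theorem stmt7
    (f0 f1 g0 g1 : ℝ → ℝ) (q : ℝ)
    (hf0m : StrictMonoOn f0 (Icc 0 1)) (hf1m : StrictMonoOn f1 (Icc 0 1))
    (hf0c : ContinuousOn f0 (Icc 0 1)) (hf1c : ContinuousOn f1 (Icc 0 1))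
    (hf0map : MapsTo f0 (Icc 0 1) (Icc 0 1)) (hf1map : MapsTo f1 (Icc 0 1) (Icc 0 1))
    (hf0lip : ∃ c, 0 ≤ c ∧ c < 1 ∧ ∀ x ∈ Icc (0:ℝ) 1, ∀ y ∈ Icc (0:ℝ) 1, |f0 x - f0 y| ≤ c * |x - y|)
    (hf1lip : ∃ c, 0 ≤ c ∧ c < 1 ∧ ∀ x ∈ Icc (0:ℝ) 1, ∀ y ∈ Icc (0:ℝ) 1, |f1 x - f1 y| ≤ c * |x - y|)
    (hf00 : f0 0 = 0) (hf11 : f1 1 = 1)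
    (hf10pos : 0 < f1 0) (hoverf0f1 : f1 0 < f0 1) (hf01lt : f0 1 < 1)
    (hq : q ∈ Ioo (f1 0) (f0 1))
    (hg0 : ∀ x ∈ Icc (0:ℝ) 1, g0 (f0 x) = x) (hg1 : ∀ x ∈ Icc (0:ℝ) 1, g1 (f1 x) = x) :
    closure (tauPlus g0 g1 q '' (Icc 0 1)) =
      tauPlus g0 g1 q '' (Icc 0 1) ∪ tauMinus g0 g1 q '' (Icc 0 1) ∧
    closure (tauMinus g0 g1 q '' (Icc 0 1)) =
      tauPlus g0 g1 q '' (Icc 0 1) ∪ tauMinus g0 g1 q '' (Icc 0 1) :=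
  stmt7_general f0 f1 g0 g1 q hf0m hf1m hf0c hf1c hf0map hf1map hf0lip hf1lip hf00 hf11 hq hg0 hg1
end

section
/- Let F and G be overlapping masked IFSs with mask points q, p, critical itineraries α_F = τ_F^-(q), β_F = τ_F^+(q), α_G = τ_G^-(p), β_G = τ_G^+(p). Then the address spaces are equal (Ω_F^+ = Ω_G^+ and Ω_F^- = Ω_G^-) if and only if the critical itineraries are equal (α_F = α_G and β_F = β_G). -/
open Set Filter Topology

/-! ### Auxiliary development -/

namespace Stmt11

lemma lexLt_of {σ ω : ℕ → Bool} {k : ℕ} (hf : σ k = false) (ht : ω k = true)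
    (hag : ∀ j < k, σ j = ω j) : lexLt σ ω :=
  ⟨k, hag, by rw [hf, ht]; decide⟩

lemma lexLt_asymm {σ ω : ℕ → Bool} (h1 : lexLt σ ω) (h2 : lexLt ω σ) : False := by
  obtain ⟨k1, hA, l1⟩ := h1
  obtain ⟨k2, hB, l2⟩ := h2
  obtain ⟨e1, e2⟩ := Bool.lt_iff.1 l1
  obtain ⟨e3, e4⟩ := Bool.lt_iff.1 l2
  rcases lt_trichotomy k1 k2 with h | h | h
  · have h3 := hB k1 h
    rw [e2, e1] at h3
    exact Bool.noConfusion h3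
  · subst h
    rw [e2] at e3
    exact Bool.noConfusion e3
  · have h3 := hA k2 h
    rw [e4, e3] at h3
    exact Bool.noConfusion h3

lemma lexLe_antisymm {σ ω : ℕ → Bool} (h1 : lexLe σ ω) (h2 : lexLe ω σ) : σ = ω := by
  rcases h1 with h1 | h1
  · rcases h2 with h2 | h2
    · exact absurd h2 (fun h => lexLt_asymm h1 h)
    · exact h2.symm
  · exact h1

lemma shiftn_zero (ω : ℕ → Bool) : shiftn 0 ω = ω := funext fun j => rfl

lemma shiftn_shiftn (n m : ℕ) (ω : ℕ → Bool) : shiftn n (shiftn m ω) = shiftn (n + m) ω := by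
  funext j
  show ω (j + n + m) = ω (j + (n + m))
  rw [Nat.add_assoc]

lemma abs_sub_le_one' {a b : ℝ} (ha : a ∈ Icc (0:ℝ) 1) (hb : b ∈ Icc (0:ℝ) 1) : |a - b| ≤ 1 := by
  rw [abs_sub_le_iff]
  constructor <;> linarith [ha.1, ha.2, hb.1, hb.2]

/-- Kneading condition for the plus system. -/
def Cp (α β ω : ℕ → Bool) : Prop :=
  ∀ n, (ω n = true → lexLe β (shiftn n ω)) ∧ (ω n = false → lexLt (shiftn n ω) α)

/-- Kneading condition for the minus system. -/
def Cm (α β ω : ℕ → Bool) : Prop :=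
  ∀ n, (ω n = true → lexLt β (shiftn n ω)) ∧ (ω n = false → lexLe (shiftn n ω) α)

/-- Weak kneading condition. -/
def Cw (α β ω : ℕ → Bool) : Prop :=
  ∀ n, (ω n = true → lexLe β (shiftn n ω)) ∧ (ω n = false → lexLe (shiftn n ω) α)

lemma Cp_toCw {α β ω : ℕ → Bool} (h : Cp α β ω) : Cw α β ω :=
  fun n => ⟨fun ht => (h n).1 ht, fun hf => Or.inl ((h n).2 hf)⟩

lemma Cm_toCw {α β ω : ℕ → Bool} (h : Cm α β ω) : Cw α β ω :=
  fun n => ⟨fun ht => Or.inl ((h n).1 ht), fun hf => (h n).2 hf⟩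

lemma Cw_shift {α β ω : ℕ → Bool} (h : Cw α β ω) (m : ℕ) : Cw α β (shiftn m ω) := by
  intro n
  constructor
  · intro ht
    rw [shiftn_shiftn]
    exact (h (n + m)).1 ht
  · intro hf
    rw [shiftn_shiftn]
    exact (h (n + m)).2 hf

lemma Cp_shift {α β ω : ℕ → Bool} (h : Cp α β ω) (m : ℕ) : Cp α β (shiftn m ω) := by
  intro n
  constructor
  · intro ht
    rw [shiftn_shiftn]
    exact (h (n + m)).1 ht
  · intro hf
    rw [shiftn_shiftn]
    exact (h (n + m)).2 hf

lemma Cm_shift {α β ω : ℕ → Bool} (h : Cm α β ω) (m : ℕ) : Cm α β (shiftn m ω) := by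
  intro n
  constructor
  · intro ht
    rw [shiftn_shiftn]
    exact (h (n + m)).1 ht
  · intro hf
    rw [shiftn_shiftn]
    exact (h (n + m)).2 hf

/-- A masked overlapping IFS on `[0,1]`. -/
structure Sys where
  f0 : ℝ → ℝ
  f1 : ℝ → ℝ
  g0 : ℝ → ℝ
  g1 : ℝ → ℝ
  q : ℝ
  c : ℝ
  hc0 : 0 ≤ c
  hc1 : c < 1
  m0 : StrictMonoOn f0 (Icc 0 1)
  m1 : StrictMonoOn f1 (Icc 0 1)
  ct0 : ContinuousOn f0 (Icc 0 1)
  ct1 : ContinuousOn f1 (Icc 0 1)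
  map0 : MapsTo f0 (Icc 0 1) (Icc 0 1)
  map1 : MapsTo f1 (Icc 0 1) (Icc 0 1)
  lip0 : ∀ x ∈ Icc (0:ℝ) 1, ∀ y ∈ Icc (0:ℝ) 1, |f0 x - f0 y| ≤ c * |x - y|
  lip1 : ∀ x ∈ Icc (0:ℝ) 1, ∀ y ∈ Icc (0:ℝ) 1, |f1 x - f1 y| ≤ c * |x - y|
  f00 : f0 0 = 0
  f11 : f1 1 = 1
  f10pos : 0 < f1 0
  f01lt : f0 1 < 1
  q_lb : f1 0 < q
  q_ub : q < f0 1
  gf0 : ∀ x ∈ Icc (0:ℝ) 1, g0 (f0 x) = x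
  gf1 : ∀ x ∈ Icc (0:ℝ) 1, g1 (f1 x) = x

namespace Sys

variable (S : Sys)

noncomputable def Tp : ℝ → ℝ := Tplus S.g0 S.g1 S.q
noncomputable def Tm : ℝ → ℝ := Tminus S.g0 S.g1 S.q
noncomputable def ip : ℝ → ℕ → Bool := tauPlus S.g0 S.g1 S.q
noncomputable def im : ℝ → ℕ → Bool := tauMinus S.g0 S.g1 S.q
noncomputable def W : (ℕ → Bool) → ℕ → ℝ → ℝ := wordMap S.f0 S.f1

lemma ip_apply (x : ℝ) (n : ℕ) : S.ip x n = decide (S.q ≤ S.Tp^[n] x) := rfl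
lemma im_apply (x : ℝ) (n : ℕ) : S.im x n = decide (S.q < S.Tm^[n] x) := rfl

lemma q_pos : 0 < S.q := S.f10pos.trans S.q_lb
lemma q_lt_one : S.q < 1 := S.q_ub.trans S.f01lt
lemma q_mem : S.q ∈ Icc (0:ℝ) 1 := ⟨S.q_pos.le, S.q_lt_one.le⟩

lemma g0_spec : ∀ y ∈ Icc (0:ℝ) (S.f0 1), S.g0 y ∈ Icc (0:ℝ) 1 ∧ S.f0 (S.g0 y) = y := by
  intro y hy
  have h := intermediate_value_Icc (zero_le_one) S.ct0
  rw [S.f00] at h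
  obtain ⟨x, hx, hfx⟩ := h hy
  have e : S.g0 y = x := by rw [← hfx, S.gf0 x hx]
  rw [e]
  exact ⟨hx, hfx⟩

lemma g1_spec : ∀ y ∈ Icc (S.f1 0) 1, S.g1 y ∈ Icc (0:ℝ) 1 ∧ S.f1 (S.g1 y) = y := by
  intro y hy
  have h := intermediate_value_Icc (zero_le_one) S.ct1
  rw [S.f11] at h
  obtain ⟨x, hx, hfx⟩ := h hy
  have e : S.g1 y = x := by rw [← hfx, S.gf1 x hx]
  rw [e]
  exact ⟨hx, hfx⟩

lemma dom0 {x : ℝ} (hx : x ∈ Icc (0:ℝ) 1) (h : x ≤ S.q) : x ∈ Icc (0:ℝ) (S.f0 1) :=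
  ⟨hx.1, h.trans S.q_ub.le⟩

lemma dom1 {x : ℝ} (hx : x ∈ Icc (0:ℝ) 1) (h : S.q ≤ x) : x ∈ Icc (S.f1 0) 1 :=
  ⟨(S.q_lb.trans_le h).le, hx.2⟩

lemma g0_mono {u v : ℝ} (hu : u ∈ Icc (0:ℝ) (S.f0 1)) (hv : v ∈ Icc (0:ℝ) (S.f0 1))
    (h : u ≤ v) : S.g0 u ≤ S.g0 v := by
  by_contra hc
  push_neg at hc
  have h2 := S.m0 (S.g0_spec v hv).1 (S.g0_spec u hu).1 hc
  rw [(S.g0_spec v hv).2, (S.g0_spec u hu).2] at h2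
  exact absurd h (not_le.2 h2)

lemma g0_strict {u v : ℝ} (hu : u ∈ Icc (0:ℝ) (S.f0 1)) (hv : v ∈ Icc (0:ℝ) (S.f0 1))
    (h : u < v) : S.g0 u < S.g0 v := by
  rcases (S.g0_mono hu hv h.le).lt_or_eq with h' | h'
  · exact h'
  · exfalso
    have h2 := congrArg S.f0 h'
    rw [(S.g0_spec u hu).2, (S.g0_spec v hv).2] at h2
    exact h.ne h2

lemma g1_mono {u v : ℝ} (hu : u ∈ Icc (S.f1 0) 1) (hv : v ∈ Icc (S.f1 0) 1)
    (h : u ≤ v) : S.g1 u ≤ S.g1 v := by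
  by_contra hc
  push_neg at hc
  have h2 := S.m1 (S.g1_spec v hv).1 (S.g1_spec u hu).1 hc
  rw [(S.g1_spec v hv).2, (S.g1_spec u hu).2] at h2
  exact absurd h (not_le.2 h2)

lemma g1_strict {u v : ℝ} (hu : u ∈ Icc (S.f1 0) 1) (hv : v ∈ Icc (S.f1 0) 1)
    (h : u < v) : S.g1 u < S.g1 v := by
  rcases (S.g1_mono hu hv h.le).lt_or_eq with h' | h'
  · exact h'
  · exfalso
    have h2 := congrArg S.f1 h'
    rw [(S.g1_spec u hu).2, (S.g1_spec v hv).2] at h2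
    exact h.ne h2

lemma Tp_lt {x : ℝ} (h : x < S.q) : S.Tp x = S.g0 x := if_pos h
lemma Tp_ge {x : ℝ} (h : S.q ≤ x) : S.Tp x = S.g1 x := if_neg (not_lt.2 h)
lemma Tm_le {x : ℝ} (h : x ≤ S.q) : S.Tm x = S.g0 x := if_pos h
lemma Tm_gt {x : ℝ} (h : S.q < x) : S.Tm x = S.g1 x := if_neg (not_le.2 h)

lemma Tp_mem {x : ℝ} (hx : x ∈ Icc (0:ℝ) 1) : S.Tp x ∈ Icc (0:ℝ) 1 := by
  by_cases h : x < S.q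
  · rw [S.Tp_lt h]
    exact (S.g0_spec x (S.dom0 hx h.le)).1
  · rw [S.Tp_ge (not_lt.1 h)]
    exact (S.g1_spec x (S.dom1 hx (not_lt.1 h))).1

lemma Tm_mem {x : ℝ} (hx : x ∈ Icc (0:ℝ) 1) : S.Tm x ∈ Icc (0:ℝ) 1 := by
  by_cases h : x ≤ S.q
  · rw [S.Tm_le h]
    exact (S.g0_spec x (S.dom0 hx h)).1
  · rw [S.Tm_gt (not_le.1 h)]
    exact (S.g1_spec x (S.dom1 hx (not_le.1 h).le)).1

lemma Tp_iter_mem {x : ℝ} (hx : x ∈ Icc (0:ℝ) 1) (n : ℕ) : S.Tp^[n] x ∈ Icc (0:ℝ) 1 := by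
  induction n with
  | zero => simpa using hx
  | succ n IH =>
    rw [Function.iterate_succ_apply']
    exact S.Tp_mem IH

lemma Tm_iter_mem {x : ℝ} (hx : x ∈ Icc (0:ℝ) 1) (n : ℕ) : S.Tm^[n] x ∈ Icc (0:ℝ) 1 := by
  induction n with
  | zero => simpa using hx
  | succ n IH =>
    rw [Function.iterate_succ_apply']
    exact S.Tm_mem IH

lemma step_plus {x : ℝ} (hx : x ∈ Icc (0:ℝ) 1) :
    (cond (S.ip x 0) S.f1 S.f0) (S.Tp x) = x := by
  by_cases h : x < S.q
  · have h0 : S.ip x 0 = false := decide_eq_false (not_le.2 h)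
    rw [h0]
    show S.f0 (S.Tp x) = x
    rw [S.Tp_lt h]
    exact (S.g0_spec x (S.dom0 hx h.le)).2
  · have h' : S.q ≤ x := not_lt.1 h
    have h0 : S.ip x 0 = true := decide_eq_true h'
    rw [h0]
    show S.f1 (S.Tp x) = x
    rw [S.Tp_ge h']
    exact (S.g1_spec x (S.dom1 hx h')).2

lemma step_minus {x : ℝ} (hx : x ∈ Icc (0:ℝ) 1) :
    (cond (S.im x 0) S.f1 S.f0) (S.Tm x) = x := by
  by_cases h : x ≤ S.q
  · have h0 : S.im x 0 = false := decide_eq_false (not_lt.2 h)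
    rw [h0]
    show S.f0 (S.Tm x) = x
    rw [S.Tm_le h]
    exact (S.g0_spec x (S.dom0 hx h)).2
  · have h' : S.q < x := not_le.1 h
    have h0 : S.im x 0 = true := decide_eq_true h'
    rw [h0]
    show S.f1 (S.Tm x) = x
    rw [S.Tm_gt h']
    exact (S.g1_spec x (S.dom1 hx h'.le)).2

lemma word_orbit_plus {x : ℝ} (hx : x ∈ Icc (0:ℝ) 1) :
    ∀ k, S.W (S.ip x) k (S.Tp^[k+1] x) = x := by
  intro k
  induction k with
  | zero =>
    show (cond (S.ip x 0) S.f1 S.f0) (S.Tp^[1] x) = x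
    rw [Function.iterate_one]
    exact S.step_plus hx
  | succ k IH =>
    show S.W (S.ip x) k ((cond (S.ip x (k+1)) S.f1 S.f0) (S.Tp^[k+2] x)) = x
    have e2 : S.ip x (k+1) = S.ip (S.Tp^[k+1] x) 0 := rfl
    have e : (cond (S.ip x (k+1)) S.f1 S.f0) (S.Tp^[k+2] x) = S.Tp^[k+1] x := by
      rw [e2, Function.iterate_succ_apply' S.Tp (k+1) x]
      exact S.step_plus (S.Tp_iter_mem hx (k+1))
    rw [e]
    exact IH

lemma word_orbit_minus {x : ℝ} (hx : x ∈ Icc (0:ℝ) 1) :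
    ∀ k, S.W (S.im x) k (S.Tm^[k+1] x) = x := by
  intro k
  induction k with
  | zero =>
    show (cond (S.im x 0) S.f1 S.f0) (S.Tm^[1] x) = x
    rw [Function.iterate_one]
    exact S.step_minus hx
  | succ k IH =>
    show S.W (S.im x) k ((cond (S.im x (k+1)) S.f1 S.f0) (S.Tm^[k+2] x)) = x
    have e2 : S.im x (k+1) = S.im (S.Tm^[k+1] x) 0 := rfl
    have e : (cond (S.im x (k+1)) S.f1 S.f0) (S.Tm^[k+2] x) = S.Tm^[k+1] x := by
      rw [e2, Function.iterate_succ_apply' S.Tm (k+1) x]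
      exact S.step_minus (S.Tm_iter_mem hx (k+1))
    rw [e]
    exact IH

lemma cond_mem {b : Bool} {a : ℝ} (ha : a ∈ Icc (0:ℝ) 1) :
    (cond b S.f1 S.f0) a ∈ Icc (0:ℝ) 1 := by
  cases b
  · exact S.map0 ha
  · exact S.map1 ha

lemma cond_lt {b : Bool} {a a' : ℝ} (ha : a ∈ Icc (0:ℝ) 1) (ha' : a' ∈ Icc (0:ℝ) 1)
    (h : a < a') : (cond b S.f1 S.f0) a < (cond b S.f1 S.f0) a' := by
  cases b
  · exact S.m0 ha ha' h
  · exact S.m1 ha ha' h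

lemma cond_lip {b : Bool} {a a' : ℝ} (ha : a ∈ Icc (0:ℝ) 1) (ha' : a' ∈ Icc (0:ℝ) 1) :
    |(cond b S.f1 S.f0) a - (cond b S.f1 S.f0) a'| ≤ S.c * |a - a'| := by
  cases b
  · exact S.lip0 a ha a' ha'
  · exact S.lip1 a ha a' ha'

lemma W_mem (ω : ℕ → Bool) : ∀ k, ∀ a ∈ Icc (0:ℝ) 1, S.W ω k a ∈ Icc (0:ℝ) 1 := by
  intro k
  induction k with
  | zero => intro a ha; exact S.cond_mem ha
  | succ k IH =>
    intro a ha
    exact IH _ (S.cond_mem ha)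

lemma W_lt (ω : ℕ → Bool) : ∀ k, ∀ a ∈ Icc (0:ℝ) 1, ∀ a' ∈ Icc (0:ℝ) 1, a < a' →
    S.W ω k a < S.W ω k a' := by
  intro k
  induction k with
  | zero => intro a ha a' ha' h; exact S.cond_lt ha ha' h
  | succ k IH =>
    intro a ha a' ha' h
    exact IH _ (S.cond_mem ha) _ (S.cond_mem ha') (S.cond_lt ha ha' h)

lemma W_le (ω : ℕ → Bool) (k : ℕ) {a a' : ℝ} (ha : a ∈ Icc (0:ℝ) 1) (ha' : a' ∈ Icc (0:ℝ) 1)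
    (h : a ≤ a') : S.W ω k a ≤ S.W ω k a' := by
  rcases h.lt_or_eq with h' | h'
  · exact (S.W_lt ω k a ha a' ha' h').le
  · rw [h']

lemma W_lip (ω : ℕ → Bool) : ∀ k, ∀ a ∈ Icc (0:ℝ) 1, ∀ a' ∈ Icc (0:ℝ) 1,
    |S.W ω k a - S.W ω k a'| ≤ S.c^(k+1) * |a - a'| := by
  intro k
  induction k with
  | zero =>
    intro a ha a' ha'
    rw [pow_one]
    exact S.cond_lip ha ha'
  | succ k IH =>
    intro a ha a' ha'
    calc |S.W ω k ((cond (ω (k+1)) S.f1 S.f0) a) - S.W ω k ((cond (ω (k+1)) S.f1 S.f0) a')|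
        ≤ S.c^(k+1) * |(cond (ω (k+1)) S.f1 S.f0) a - (cond (ω (k+1)) S.f1 S.f0) a'| :=
          IH _ (S.cond_mem ha) _ (S.cond_mem ha')
      _ ≤ S.c^(k+1) * (S.c * |a - a'|) :=
          mul_le_mul_of_nonneg_left (S.cond_lip ha ha') (pow_nonneg S.hc0 _)
      _ = S.c^(k+1+1) * |a - a'| := by ring

lemma W_congr {ω ω' : ℕ → Bool} : ∀ k, (∀ j ≤ k, ω j = ω' j) → ∀ a, S.W ω k a = S.W ω' k a := by
  intro k
  induction k with
  | zero =>
    intro h a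
    show (cond (ω 0) S.f1 S.f0) a = (cond (ω' 0) S.f1 S.f0) a
    rw [h 0 (le_refl 0)]
  | succ k IH =>
    intro h a
    show S.W ω k ((cond (ω (k+1)) S.f1 S.f0) a) = S.W ω' k ((cond (ω' (k+1)) S.f1 S.f0) a)
    rw [h (k+1) (le_refl _)]
    exact IH (fun j hj => h j (hj.trans (Nat.le_succ k))) _

lemma W_cons (ω : ℕ → Bool) : ∀ k, ∀ a, S.W ω (k+1) a =
    (cond (ω 0) S.f1 S.f0) (S.W (shiftn 1 ω) k a) := by
  intro k
  induction k with
  | zero => intro a; rfl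
  | succ k IH =>
    intro a
    show S.W ω (k+1) ((cond (ω (k+2)) S.f1 S.f0) a) = _
    rw [IH]
    rfl

lemma cauchy (ω : ℕ → Bool) : CauchySeq (fun k => S.W ω k S.q) := by
  apply cauchySeq_of_le_geometric S.c S.c S.hc1
  intro n
  have e : S.W ω (n+1) S.q = S.W ω n ((cond (ω (n+1)) S.f1 S.f0) S.q) := rfl
  rw [Real.dist_eq, e]
  have hF : (cond (ω (n+1)) S.f1 S.f0) S.q ∈ Icc (0:ℝ) 1 := S.cond_mem S.q_mem
  calc |S.W ω n S.q - S.W ω n ((cond (ω (n+1)) S.f1 S.f0) S.q)|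
      ≤ S.c^(n+1) * |S.q - (cond (ω (n+1)) S.f1 S.f0) S.q| := S.W_lip ω n _ S.q_mem _ hF
    _ ≤ S.c^(n+1) * 1 :=
        mul_le_mul_of_nonneg_left (abs_sub_le_one' S.q_mem hF) (pow_nonneg S.hc0 _)
    _ = S.c * S.c^n := by ring

noncomputable def pi (ω : ℕ → Bool) : ℝ :=
  (cauchySeq_tendsto_of_complete (S.cauchy ω)).choose

lemma pi_tendsto (ω : ℕ → Bool) : Tendsto (fun k => S.W ω k S.q) atTop (𝓝 (S.pi ω)) :=
  (cauchySeq_tendsto_of_complete (S.cauchy ω)).choose_spec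

lemma pi_mem (ω : ℕ → Bool) : S.pi ω ∈ Icc (0:ℝ) 1 :=
  isClosed_Icc.mem_of_tendsto (S.pi_tendsto ω)
    (Eventually.of_forall fun k => S.W_mem ω k _ S.q_mem)

lemma pi_cons (ω : ℕ → Bool) : S.pi ω = (cond (ω 0) S.f1 S.f0) (S.pi (shiftn 1 ω)) := by
  have h1 : Tendsto (fun k => S.W ω (k+1) S.q) atTop (𝓝 (S.pi ω)) :=
    (S.pi_tendsto ω).comp (tendsto_add_atTop_nat 1)
  have hcf : ContinuousOn (cond (ω 0) S.f1 S.f0) (Icc 0 1) := by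
    cases hb : ω 0
    · exact S.ct0
    · exact S.ct1
  have h3 : Tendsto (fun k => S.W (shiftn 1 ω) k S.q) atTop
      (𝓝[Icc (0:ℝ) 1] (S.pi (shiftn 1 ω))) :=
    tendsto_nhdsWithin_of_tendsto_nhds_of_eventually_within _ (S.pi_tendsto _)
      (Eventually.of_forall fun k => S.W_mem _ k _ S.q_mem)
  have h4 : Tendsto (fun k => (cond (ω 0) S.f1 S.f0) (S.W (shiftn 1 ω) k S.q)) atTop
      (𝓝 ((cond (ω 0) S.f1 S.f0) (S.pi (shiftn 1 ω)))) :=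
    ((hcf _ (S.pi_mem _)).tendsto).comp h3
  have e : (fun k => S.W ω (k+1) S.q) =
      (fun k => (cond (ω 0) S.f1 S.f0) (S.W (shiftn 1 ω) k S.q)) :=
    funext fun k => S.W_cons ω k S.q
  rw [e] at h1
  exact tendsto_nhds_unique h1 h4

lemma pi_word (ω : ℕ → Bool) : ∀ k, S.pi ω = S.W ω k (S.pi (shiftn (k+1) ω)) := by
  intro k
  induction k generalizing ω with
  | zero => exact S.pi_cons ω
  | succ k IH =>
    calc S.pi ω = (cond (ω 0) S.f1 S.f0) (S.pi (shiftn 1 ω)) := S.pi_cons ω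
      _ = (cond (ω 0) S.f1 S.f0) (S.W (shiftn 1 ω) k (S.pi (shiftn (k+1) (shiftn 1 ω)))) := by
          rw [← IH (shiftn 1 ω)]
      _ = S.W ω (k+1) (S.pi (shiftn (k+1) (shiftn 1 ω))) := (S.W_cons ω k _).symm
      _ = S.W ω (k+1) (S.pi (shiftn (k+1+1) ω)) := by rw [shiftn_shiftn]

lemma pi_itin_plus {x : ℝ} (hx : x ∈ Icc (0:ℝ) 1) : S.pi (S.ip x) = x := by
  have h2 : Tendsto (fun k => S.W (S.ip x) k S.q) atTop (𝓝 x) := by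
    rw [tendsto_iff_dist_tendsto_zero]
    apply squeeze_zero (g := fun k => S.c^(k+1)) (fun k => dist_nonneg)
    · intro k
      rw [Real.dist_eq]
      calc |S.W (S.ip x) k S.q - x|
          = |S.W (S.ip x) k S.q - S.W (S.ip x) k (S.Tp^[k+1] x)| := by
            rw [S.word_orbit_plus hx k]
        _ ≤ S.c^(k+1) * |S.q - S.Tp^[k+1] x| :=
            S.W_lip _ k _ S.q_mem _ (S.Tp_iter_mem hx (k+1))
        _ ≤ S.c^(k+1) * 1 :=
            mul_le_mul_of_nonneg_left (abs_sub_le_one' S.q_mem (S.Tp_iter_mem hx _))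
              (pow_nonneg S.hc0 _)
        _ = S.c^(k+1) := mul_one _
    · exact (tendsto_pow_atTop_nhds_zero_of_lt_one S.hc0 S.hc1).comp (tendsto_add_atTop_nat 1)
  exact tendsto_nhds_unique (S.pi_tendsto _) h2

lemma pi_itin_minus {x : ℝ} (hx : x ∈ Icc (0:ℝ) 1) : S.pi (S.im x) = x := by
  have h2 : Tendsto (fun k => S.W (S.im x) k S.q) atTop (𝓝 x) := by
    rw [tendsto_iff_dist_tendsto_zero]
    apply squeeze_zero (g := fun k => S.c^(k+1)) (fun k => dist_nonneg)
    · intro k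
      rw [Real.dist_eq]
      calc |S.W (S.im x) k S.q - x|
          = |S.W (S.im x) k S.q - S.W (S.im x) k (S.Tm^[k+1] x)| := by
            rw [S.word_orbit_minus hx k]
        _ ≤ S.c^(k+1) * |S.q - S.Tm^[k+1] x| :=
            S.W_lip _ k _ S.q_mem _ (S.Tm_iter_mem hx (k+1))
        _ ≤ S.c^(k+1) * 1 :=
            mul_le_mul_of_nonneg_left (abs_sub_le_one' S.q_mem (S.Tm_iter_mem hx _))
              (pow_nonneg S.hc0 _)
        _ = S.c^(k+1) := mul_one _
    · exact (tendsto_pow_atTop_nhds_zero_of_lt_one S.hc0 S.hc1).comp (tendsto_add_atTop_nat 1)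
  exact tendsto_nhds_unique (S.pi_tendsto _) h2

end Sys

namespace Sys

variable (S : Sys)

lemma orbit_le_pp {x y : ℝ} (hx : x ∈ Icc (0:ℝ) 1) (hy : y ∈ Icc (0:ℝ) 1) (hxy : x ≤ y) :
    ∀ k, (∀ j, j < k → S.ip x j = S.ip y j) → S.Tp^[k] x ≤ S.Tp^[k] y := by
  intro k
  induction k with
  | zero => intro _; simpa using hxy
  | succ k IH =>
    intro hag
    have hk := IH (fun j hj => hag j (hj.trans (Nat.lt_succ_self k)))
    have hu := S.Tp_iter_mem hx k
    have hv := S.Tp_iter_mem hy k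
    have hlet := hag k (Nat.lt_succ_self k)
    rw [S.ip_apply, S.ip_apply] at hlet
    have hletter : (S.q ≤ S.Tp^[k] x) ↔ (S.q ≤ S.Tp^[k] y) := decide_eq_decide.1 hlet
    rw [Function.iterate_succ_apply', Function.iterate_succ_apply']
    by_cases h : S.q ≤ S.Tp^[k] x
    · have h2 : S.q ≤ S.Tp^[k] y := hletter.1 h
      rw [S.Tp_ge h, S.Tp_ge h2]
      exact S.g1_mono (S.dom1 hu h) (S.dom1 hv h2) hk
    · have h2 : ¬ S.q ≤ S.Tp^[k] y := fun hh => h (hletter.2 hh)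
      rw [S.Tp_lt (not_le.1 h), S.Tp_lt (not_le.1 h2)]
      exact S.g0_mono (S.dom0 hu (not_le.1 h).le) (S.dom0 hv (not_le.1 h2).le) hk

lemma orbit_le_mm {x y : ℝ} (hx : x ∈ Icc (0:ℝ) 1) (hy : y ∈ Icc (0:ℝ) 1) (hxy : x ≤ y) :
    ∀ k, (∀ j, j < k → S.im x j = S.im y j) → S.Tm^[k] x ≤ S.Tm^[k] y := by
  intro k
  induction k with
  | zero => intro _; simpa using hxy
  | succ k IH =>
    intro hag
    have hk := IH (fun j hj => hag j (hj.trans (Nat.lt_succ_self k)))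
    have hu := S.Tm_iter_mem hx k
    have hv := S.Tm_iter_mem hy k
    have hlet := hag k (Nat.lt_succ_self k)
    rw [S.im_apply, S.im_apply] at hlet
    have hletter : (S.q < S.Tm^[k] x) ↔ (S.q < S.Tm^[k] y) := decide_eq_decide.1 hlet
    rw [Function.iterate_succ_apply', Function.iterate_succ_apply']
    by_cases h : S.q < S.Tm^[k] x
    · have h2 : S.q < S.Tm^[k] y := hletter.1 h
      rw [S.Tm_gt h, S.Tm_gt h2]
      exact S.g1_mono (S.dom1 hu h.le) (S.dom1 hv h2.le) hk
    · have h2 : ¬ S.q < S.Tm^[k] y := fun hh => h (hletter.2 hh)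
      rw [S.Tm_le (not_lt.1 h), S.Tm_le (not_lt.1 h2)]
      exact S.g0_mono (S.dom0 hu (not_lt.1 h)) (S.dom0 hv (not_lt.1 h2)) hk

lemma orbit_lt_pm {x y : ℝ} (hx : x ∈ Icc (0:ℝ) 1) (hy : y ∈ Icc (0:ℝ) 1) (hxy : x < y) :
    ∀ k, (∀ j, j < k → S.ip x j = S.im y j) → S.Tp^[k] x < S.Tm^[k] y := by
  intro k
  induction k with
  | zero => intro _; simpa using hxy
  | succ k IH =>
    intro hag
    have hk := IH (fun j hj => hag j (hj.trans (Nat.lt_succ_self k)))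
    have hu := S.Tp_iter_mem hx k
    have hv := S.Tm_iter_mem hy k
    have hlet := hag k (Nat.lt_succ_self k)
    rw [S.ip_apply, S.im_apply] at hlet
    have hletter : (S.q ≤ S.Tp^[k] x) ↔ (S.q < S.Tm^[k] y) := decide_eq_decide.1 hlet
    rw [Function.iterate_succ_apply', Function.iterate_succ_apply']
    by_cases h : S.q ≤ S.Tp^[k] x
    · have h2 : S.q < S.Tm^[k] y := hletter.1 h
      rw [S.Tp_ge h, S.Tm_gt h2]
      exact S.g1_strict (S.dom1 hu h) (S.dom1 hv h2.le) hk
    · have h2 : ¬ S.q < S.Tm^[k] y := fun hh => h (hletter.2 hh)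
      rw [S.Tp_lt (not_le.1 h), S.Tm_le (not_lt.1 h2)]
      exact S.g0_strict (S.dom0 hu (not_le.1 h).le) (S.dom0 hv (not_lt.1 h2)) hk

lemma tau_mono_pp {x y : ℝ} (hx : x ∈ Icc (0:ℝ) 1) (hy : y ∈ Icc (0:ℝ) 1) (hxy : x ≤ y) :
    lexLe (S.ip x) (S.ip y) := by
  by_cases heq : S.ip x = S.ip y
  · exact Or.inr heq
  left
  have hne : ∃ k, S.ip x k ≠ S.ip y k := Function.ne_iff.1 heq
  have hag : ∀ j, j < Nat.find hne → S.ip x j = S.ip y j :=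
    fun j hj => not_not.1 (Nat.find_min hne hj)
  have hdiff : S.ip x (Nat.find hne) ≠ S.ip y (Nat.find hne) := Nat.find_spec hne
  have hle := S.orbit_le_pp hx hy hxy (Nat.find hne) hag
  by_cases h : S.q ≤ S.Tp^[Nat.find hne] x
  · exfalso
    apply hdiff
    rw [S.ip_apply, S.ip_apply, decide_eq_true h, decide_eq_true (h.trans hle)]
  · have e1 : S.ip x (Nat.find hne) = false := decide_eq_false h
    have e2 : S.ip y (Nat.find hne) = true := by
      cases hb : S.ip y (Nat.find hne)
      · exact absurd (e1.trans hb.symm) hdiff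
      · rfl
    exact lexLt_of e1 e2 hag

lemma tau_mono_mm {x y : ℝ} (hx : x ∈ Icc (0:ℝ) 1) (hy : y ∈ Icc (0:ℝ) 1) (hxy : x ≤ y) :
    lexLe (S.im x) (S.im y) := by
  by_cases heq : S.im x = S.im y
  · exact Or.inr heq
  left
  have hne : ∃ k, S.im x k ≠ S.im y k := Function.ne_iff.1 heq
  have hag : ∀ j, j < Nat.find hne → S.im x j = S.im y j :=
    fun j hj => not_not.1 (Nat.find_min hne hj)
  have hdiff : S.im x (Nat.find hne) ≠ S.im y (Nat.find hne) := Nat.find_spec hne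
  have hle := S.orbit_le_mm hx hy hxy (Nat.find hne) hag
  by_cases h : S.q < S.Tm^[Nat.find hne] x
  · exfalso
    apply hdiff
    rw [S.im_apply, S.im_apply, decide_eq_true h, decide_eq_true (h.trans_le hle)]
  · have e1 : S.im x (Nat.find hne) = false := decide_eq_false h
    have e2 : S.im y (Nat.find hne) = true := by
      cases hb : S.im y (Nat.find hne)
      · exact absurd (e1.trans hb.symm) hdiff
      · rfl
    exact lexLt_of e1 e2 hag

lemma tau_le_pm {x y : ℝ} (hx : x ∈ Icc (0:ℝ) 1) (hy : y ∈ Icc (0:ℝ) 1) (hxy : x < y) :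
    lexLe (S.ip x) (S.im y) := by
  by_cases heq : S.ip x = S.im y
  · exact Or.inr heq
  left
  have hne : ∃ k, S.ip x k ≠ S.im y k := Function.ne_iff.1 heq
  have hag : ∀ j, j < Nat.find hne → S.ip x j = S.im y j :=
    fun j hj => not_not.1 (Nat.find_min hne hj)
  have hdiff : S.ip x (Nat.find hne) ≠ S.im y (Nat.find hne) := Nat.find_spec hne
  have hlt := S.orbit_lt_pm hx hy hxy (Nat.find hne) hag
  by_cases h : S.q ≤ S.Tp^[Nat.find hne] x
  · exfalso
    apply hdiff
    rw [S.ip_apply, S.im_apply, decide_eq_true h, decide_eq_true (h.trans_lt hlt)]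
  · have e1 : S.ip x (Nat.find hne) = false := decide_eq_false h
    have e2 : S.im y (Nat.find hne) = true := by
      cases hb : S.im y (Nat.find hne)
      · exact absurd (e1.trans hb.symm) hdiff
      · rfl
    exact lexLt_of e1 e2 hag

lemma ip_shift (x : ℝ) (n : ℕ) : shiftn n (S.ip x) = S.ip (S.Tp^[n] x) := by
  funext k
  show S.ip x (k + n) = S.ip (S.Tp^[n] x) k
  rw [S.ip_apply, S.ip_apply, Function.iterate_add_apply]

lemma im_shift (x : ℝ) (n : ℕ) : shiftn n (S.im x) = S.im (S.Tm^[n] x) := by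
  funext k
  show S.im x (k + n) = S.im (S.Tm^[n] x) k
  rw [S.im_apply, S.im_apply, Function.iterate_add_apply]

lemma nec_plus {x : ℝ} (hx : x ∈ Icc (0:ℝ) 1) :
    Cp (S.im S.q) (S.ip S.q) (S.ip x) := by
  intro n
  have hu : S.Tp^[n] x ∈ Icc (0:ℝ) 1 := S.Tp_iter_mem hx n
  constructor
  · intro ht
    have hqu : S.q ≤ S.Tp^[n] x := of_decide_eq_true ht
    rw [S.ip_shift]
    exact S.tau_mono_pp S.q_mem hu hqu
  · intro hf
    have hqu : S.Tp^[n] x < S.q := not_le.1 (of_decide_eq_false hf)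
    rw [S.ip_shift]
    rcases S.tau_le_pm hu S.q_mem hqu with h | h
    · exact h
    · exfalso
      have h2 := congrArg S.pi h
      rw [S.pi_itin_plus hu, S.pi_itin_minus S.q_mem] at h2
      exact absurd h2 (ne_of_lt hqu)

lemma nec_minus {y : ℝ} (hy : y ∈ Icc (0:ℝ) 1) :
    Cm (S.im S.q) (S.ip S.q) (S.im y) := by
  intro n
  have hv : S.Tm^[n] y ∈ Icc (0:ℝ) 1 := S.Tm_iter_mem hy n
  constructor
  · intro ht
    have hqv : S.q < S.Tm^[n] y := of_decide_eq_true ht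
    rw [S.im_shift]
    rcases S.tau_le_pm S.q_mem hv hqv with h | h
    · exact h
    · exfalso
      have h2 := congrArg S.pi h
      rw [S.pi_itin_plus S.q_mem, S.pi_itin_minus hv] at h2
      exact absurd h2.symm (ne_of_gt hqv)
  · intro hf
    have hqv : S.Tm^[n] y ≤ S.q := not_lt.1 (of_decide_eq_false hf)
    rw [S.im_shift]
    exact S.tau_mono_mm hv S.q_mem hqv

end Sys

namespace Sys

variable (S : Sys)

lemma bound : ∀ n : ℕ, ∀ ω, Cw (S.im S.q) (S.ip S.q) ω → ∀ y ∈ Icc (0:ℝ) 1,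
    (lexLe ω (S.im y) → S.pi ω ≤ y + S.c^n) ∧ (lexLe (S.ip y) ω → y - S.c^n ≤ S.pi ω) := by
  intro n
  induction n with
  | zero =>
    intro ω hω y hy
    have h1 := S.pi_mem ω
    constructor
    · intro _
      rw [pow_zero]
      linarith [h1.2, hy.1]
    · intro _
      rw [pow_zero]
      linarith [h1.1, hy.2]
  | succ n IH =>
    have cpos : (0:ℝ) ≤ S.c ^ (n+1) := pow_nonneg S.hc0 _
    have innerA : ∀ ω, Cw (S.im S.q) (S.ip S.q) ω → ∀ y ∈ Icc (0:ℝ) 1, ∀ m : ℕ,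
        (∀ j, j < m+1 → ω j = S.im y j) → ω (m+1) = false → S.im y (m+1) = true →
        S.pi ω ≤ y + S.c^(n+1) := by
      intro ω hω y hy m hag h0 h1
      have hv : S.q < S.Tm^[m+1] y := of_decide_eq_true h1
      have hul : S.pi (shiftn (m+1) ω) ≤ S.q + S.c^n :=
        (IH (shiftn (m+1) ω) (Cw_shift hω (m+1)) S.q S.q_mem).1 ((hω (m+1)).2 h0)
      have humem := S.pi_mem (shiftn (m+1) ω)
      have hvmem := S.Tm_iter_mem hy (m+1)
      have e1 : S.pi ω = S.W ω m (S.pi (shiftn (m+1) ω)) := S.pi_word ω m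
      have e2 : y = S.W ω m (S.Tm^[m+1] y) := by
        rw [S.W_congr m (fun j hj => hag j (Nat.lt_succ_of_le hj)) (S.Tm^[m+1] y)]
        exact (S.word_orbit_minus hy m).symm
      rcases le_or_gt (S.pi (shiftn (m+1) ω)) (S.Tm^[m+1] y) with h | h
      · have h3 := S.W_le ω m humem hvmem h
        rw [← e1, ← e2] at h3
        linarith
      · have hW := S.W_lip ω m _ humem _ hvmem
        have h6 : |S.pi (shiftn (m+1) ω) - S.Tm^[m+1] y| = S.pi (shiftn (m+1) ω) - S.Tm^[m+1] y :=
          abs_of_pos (sub_pos.2 h)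
        rw [h6] at hW
        have h5 : S.W ω m (S.pi (shiftn (m+1) ω)) - S.W ω m (S.Tm^[m+1] y) ≤
            S.c^(m+1) * (S.pi (shiftn (m+1) ω) - S.Tm^[m+1] y) :=
          (le_abs_self _).trans hW
        have h7 : S.pi (shiftn (m+1) ω) - S.Tm^[m+1] y ≤ S.c ^ n := by linarith
        have h8 : S.c^(m+1) ≤ S.c^1 := pow_le_pow_of_le_one S.hc0 S.hc1.le (by omega)
        rw [pow_one] at h8
        have h9 : S.c^(m+1) * (S.pi (shiftn (m+1) ω) - S.Tm^[m+1] y) ≤ S.c * S.c^n :=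
          mul_le_mul h8 h7 (by linarith) S.hc0
        have h10 : S.c * S.c^n = S.c^(n+1) := by ring
        linarith [e1, e2]
    have innerB : ∀ ω, Cw (S.im S.q) (S.ip S.q) ω → ∀ y ∈ Icc (0:ℝ) 1, ∀ m : ℕ,
        (∀ j, j < m+1 → S.ip y j = ω j) → ω (m+1) = true → S.ip y (m+1) = false →
        y - S.c^(n+1) ≤ S.pi ω := by
      intro ω hω y hy m hag h0 h1
      have hv : S.Tp^[m+1] y < S.q := not_le.1 (of_decide_eq_false h1)
      have hul : S.q - S.c^n ≤ S.pi (shiftn (m+1) ω) :=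
        (IH (shiftn (m+1) ω) (Cw_shift hω (m+1)) S.q S.q_mem).2 ((hω (m+1)).1 h0)
      have humem := S.pi_mem (shiftn (m+1) ω)
      have hvmem := S.Tp_iter_mem hy (m+1)
      have e1 : S.pi ω = S.W ω m (S.pi (shiftn (m+1) ω)) := S.pi_word ω m
      have e2 : y = S.W ω m (S.Tp^[m+1] y) := by
        rw [S.W_congr m (fun j hj => (hag j (Nat.lt_succ_of_le hj)).symm) (S.Tp^[m+1] y)]
        exact (S.word_orbit_plus hy m).symm
      rcases le_or_gt (S.Tp^[m+1] y) (S.pi (shiftn (m+1) ω)) with h | h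
      · have h3 := S.W_le ω m hvmem humem h
        rw [← e1, ← e2] at h3
        linarith
      · have hW := S.W_lip ω m _ hvmem _ humem
        have h6 : |S.Tp^[m+1] y - S.pi (shiftn (m+1) ω)| = S.Tp^[m+1] y - S.pi (shiftn (m+1) ω) :=
          abs_of_pos (sub_pos.2 h)
        rw [h6] at hW
        have h5 : S.W ω m (S.Tp^[m+1] y) - S.W ω m (S.pi (shiftn (m+1) ω)) ≤
            S.c^(m+1) * (S.Tp^[m+1] y - S.pi (shiftn (m+1) ω)) :=
          (le_abs_self _).trans hW
        have h7 : S.Tp^[m+1] y - S.pi (shiftn (m+1) ω) ≤ S.c ^ n := by linarith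
        have h8 : S.c^(m+1) ≤ S.c^1 := pow_le_pow_of_le_one S.hc0 S.hc1.le (by omega)
        rw [pow_one] at h8
        have h9 : S.c^(m+1) * (S.Tp^[m+1] y - S.pi (shiftn (m+1) ω)) ≤ S.c * S.c^n :=
          mul_le_mul h8 h7 (by linarith) S.hc0
        have h10 : S.c * S.c^n = S.c^(n+1) := by ring
        linarith [e1, e2]
    intro ω hω y hy
    constructor
    · rintro (⟨k, hag, hlt⟩ | heq)
      · obtain ⟨e1, e2⟩ := Bool.lt_iff.1 hlt
        cases k with
        | zero =>
          have hqy : S.q < y := of_decide_eq_true e2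
          have hc0' := (hω 0).2 e1
          rw [shiftn_zero] at hc0'
          rcases hc0' with ⟨k', hag', hlt'⟩ | heq'
          · obtain ⟨e3, e4⟩ := Bool.lt_iff.1 hlt'
            cases k' with
            | zero => exact absurd (of_decide_eq_true e4) (lt_irrefl S.q)
            | succ m =>
              have h5 := innerA ω hω S.q S.q_mem m hag' e3 e4
              linarith
          · have h5 : S.pi ω = S.q := by rw [heq']; exact S.pi_itin_minus S.q_mem
            linarith
        | succ m => exact innerA ω hω y hy m hag e1 e2
      · have h5 : S.pi ω = y := by rw [heq]; exact S.pi_itin_minus hy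
        linarith
    · rintro (⟨k, hag, hlt⟩ | heq)
      · obtain ⟨e1, e2⟩ := Bool.lt_iff.1 hlt
        cases k with
        | zero =>
          have hqy : y < S.q := not_le.1 (of_decide_eq_false e1)
          have hc0' := (hω 0).1 e2
          rw [shiftn_zero] at hc0'
          rcases hc0' with ⟨k', hag', hlt'⟩ | heq'
          · obtain ⟨e3, e4⟩ := Bool.lt_iff.1 hlt'
            cases k' with
            | zero => exact absurd (le_refl S.q) (of_decide_eq_false e3)
            | succ m =>
              have h5 := innerB ω hω S.q S.q_mem m hag' e4 e3
              linarith
          · have h5 : S.pi ω = S.q := by rw [← heq']; exact S.pi_itin_plus S.q_mem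
            linarith
        | succ m => exact innerB ω hω y hy m hag e2 e1
      · have h5 : S.pi ω = y := by rw [← heq]; exact S.pi_itin_plus hy
        linarith

lemma pi_le_q {ω : ℕ → Bool} (hω : Cw (S.im S.q) (S.ip S.q) ω)
    (h : lexLe ω (S.im S.q)) : S.pi ω ≤ S.q := by
  have hb : ∀ n : ℕ, S.pi ω ≤ S.q + S.c^n := fun n => (S.bound n ω hω S.q S.q_mem).1 h
  have ht : Tendsto (fun n : ℕ => S.q + S.c^n) atTop (𝓝 (S.q + 0)) :=
    tendsto_const_nhds.add (tendsto_pow_atTop_nhds_zero_of_lt_one S.hc0 S.hc1)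
  rw [add_zero] at ht
  exact ge_of_tendsto ht (Eventually.of_forall hb)

lemma pi_ge_q {ω : ℕ → Bool} (hω : Cw (S.im S.q) (S.ip S.q) ω)
    (h : lexLe (S.ip S.q) ω) : S.q ≤ S.pi ω := by
  have hb : ∀ n : ℕ, S.q - S.c^n ≤ S.pi ω := fun n => (S.bound n ω hω S.q S.q_mem).2 h
  have ht : Tendsto (fun n : ℕ => S.q - S.c^n) atTop (𝓝 (S.q - 0)) :=
    tendsto_const_nhds.sub (tendsto_pow_atTop_nhds_zero_of_lt_one S.hc0 S.hc1)
  rw [sub_zero] at ht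
  exact le_of_tendsto ht (Eventually.of_forall hb)

lemma pi_lt_q {ω : ℕ → Bool} (hω : Cp (S.im S.q) (S.ip S.q) ω) (h0 : ω 0 = false) :
    S.pi ω < S.q := by
  have hlt := (hω 0).2 h0
  rw [shiftn_zero] at hlt
  obtain ⟨k, hag, hl⟩ := hlt
  obtain ⟨e1, e2⟩ := Bool.lt_iff.1 hl
  cases k with
  | zero => exact absurd (of_decide_eq_true e2) (lt_irrefl S.q)
  | succ m =>
    have hv : S.q < S.Tm^[m+1] S.q := of_decide_eq_true e2
    have hu : S.pi (shiftn (m+1) ω) ≤ S.q :=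
      S.pi_le_q (Cw_shift (Cp_toCw hω) (m+1)) ((Cp_toCw hω (m+1)).2 e1)
    have e3 : S.pi ω = S.W ω m (S.pi (shiftn (m+1) ω)) := S.pi_word ω m
    have e4 : S.q = S.W ω m (S.Tm^[m+1] S.q) := by
      rw [S.W_congr m (fun j hj => hag j (Nat.lt_succ_of_le hj)) (S.Tm^[m+1] S.q)]
      exact (S.word_orbit_minus S.q_mem m).symm
    have h5 := S.W_lt ω m _ (S.pi_mem _) _ (S.Tm_iter_mem S.q_mem (m+1)) (lt_of_le_of_lt hu hv)
    rw [← e3, ← e4] at h5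
    exact h5

lemma pi_gt_q {ω : ℕ → Bool} (hω : Cm (S.im S.q) (S.ip S.q) ω) (h0 : ω 0 = true) :
    S.q < S.pi ω := by
  have hlt := (hω 0).1 h0
  rw [shiftn_zero] at hlt
  obtain ⟨k, hag, hl⟩ := hlt
  obtain ⟨e1, e2⟩ := Bool.lt_iff.1 hl
  cases k with
  | zero => exact absurd (le_refl S.q) (of_decide_eq_false e1)
  | succ m =>
    have hv : S.Tp^[m+1] S.q < S.q := not_le.1 (of_decide_eq_false e1)
    have hu : S.q ≤ S.pi (shiftn (m+1) ω) :=
      S.pi_ge_q (Cw_shift (Cm_toCw hω) (m+1)) ((Cm_toCw hω (m+1)).1 e2)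
    have e3 : S.pi ω = S.W ω m (S.pi (shiftn (m+1) ω)) := S.pi_word ω m
    have e4 : S.q = S.W ω m (S.Tp^[m+1] S.q) := by
      rw [S.W_congr m (fun j hj => (hag j (Nat.lt_succ_of_le hj)).symm) (S.Tp^[m+1] S.q)]
      exact (S.word_orbit_plus S.q_mem m).symm
    have h5 := S.W_lt ω m _ (S.Tp_iter_mem S.q_mem (m+1)) _ (S.pi_mem _) (lt_of_lt_of_le hv hu)
    rw [← e3, ← e4] at h5
    exact h5

end Sys

namespace Sys

variable (S : Sys)

lemma orbit_plus {ω : ℕ → Bool} (hω : Cp (S.im S.q) (S.ip S.q) ω) :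
    ∀ n, S.Tp^[n] (S.pi ω) = S.pi (shiftn n ω) := by
  intro n
  induction n with
  | zero => rw [shiftn_zero]; exact Function.iterate_zero_apply _ _
  | succ n IH =>
    rw [Function.iterate_succ_apply', IH]
    have hρ : Cp (S.im S.q) (S.ip S.q) (shiftn n ω) := Cp_shift hω n
    cases hb : shiftn n ω 0 with
    | false =>
      have hlt := S.pi_lt_q hρ hb
      rw [S.Tp_lt hlt, S.pi_cons (shiftn n ω), hb]
      show S.g0 (S.f0 (S.pi (shiftn 1 (shiftn n ω)))) = _
      rw [S.gf0 _ (S.pi_mem _), shiftn_shiftn, Nat.add_comm 1 n]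
    | true =>
      have hge : S.q ≤ S.pi (shiftn n ω) := by
        apply S.pi_ge_q (Cw_shift (Cp_toCw hω) n)
        have h2 := (hρ 0).1 hb
        rwa [shiftn_zero] at h2
      rw [S.Tp_ge hge, S.pi_cons (shiftn n ω), hb]
      show S.g1 (S.f1 (S.pi (shiftn 1 (shiftn n ω)))) = _
      rw [S.gf1 _ (S.pi_mem _), shiftn_shiftn, Nat.add_comm 1 n]

lemma orbit_minus {ω : ℕ → Bool} (hω : Cm (S.im S.q) (S.ip S.q) ω) :
    ∀ n, S.Tm^[n] (S.pi ω) = S.pi (shiftn n ω) := by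
  intro n
  induction n with
  | zero => rw [shiftn_zero]; exact Function.iterate_zero_apply _ _
  | succ n IH =>
    rw [Function.iterate_succ_apply', IH]
    have hρ : Cm (S.im S.q) (S.ip S.q) (shiftn n ω) := Cm_shift hω n
    cases hb : shiftn n ω 0 with
    | false =>
      have hle : S.pi (shiftn n ω) ≤ S.q := by
        apply S.pi_le_q (Cw_shift (Cm_toCw hω) n)
        have h2 := (hρ 0).2 hb
        rwa [shiftn_zero] at h2
      rw [S.Tm_le hle, S.pi_cons (shiftn n ω), hb]
      show S.g0 (S.f0 (S.pi (shiftn 1 (shiftn n ω)))) = _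
      rw [S.gf0 _ (S.pi_mem _), shiftn_shiftn, Nat.add_comm 1 n]
    | true =>
      have hgt := S.pi_gt_q hρ hb
      rw [S.Tm_gt hgt, S.pi_cons (shiftn n ω), hb]
      show S.g1 (S.f1 (S.pi (shiftn 1 (shiftn n ω)))) = _
      rw [S.gf1 _ (S.pi_mem _), shiftn_shiftn, Nat.add_comm 1 n]

lemma realize_plus {ω : ℕ → Bool} (hω : Cp (S.im S.q) (S.ip S.q) ω) :
    S.ip (S.pi ω) = ω := by
  funext n
  rw [S.ip_apply, S.orbit_plus hω n]
  have hρ : Cp (S.im S.q) (S.ip S.q) (shiftn n ω) := Cp_shift hω n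
  cases hb : ω n with
  | false =>
    have h0 : shiftn n ω 0 = false := by
      show ω (0 + n) = false
      rw [Nat.zero_add]
      exact hb
    exact decide_eq_false (not_le.2 (S.pi_lt_q hρ h0))
  | true =>
    have h0 : shiftn n ω 0 = true := by
      show ω (0 + n) = true
      rw [Nat.zero_add]
      exact hb
    have h2 := (hρ 0).1 h0
    rw [shiftn_zero] at h2
    exact decide_eq_true (S.pi_ge_q (Cw_shift (Cp_toCw hω) n) h2)

lemma realize_minus {ω : ℕ → Bool} (hω : Cm (S.im S.q) (S.ip S.q) ω) :
    S.im (S.pi ω) = ω := by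
  funext n
  rw [S.im_apply, S.orbit_minus hω n]
  have hρ : Cm (S.im S.q) (S.ip S.q) (shiftn n ω) := Cm_shift hω n
  cases hb : ω n with
  | false =>
    have h0 : shiftn n ω 0 = false := by
      show ω (0 + n) = false
      rw [Nat.zero_add]
      exact hb
    have h2 := (hρ 0).2 h0
    rw [shiftn_zero] at h2
    exact decide_eq_false (not_lt.2 (S.pi_le_q (Cw_shift (Cm_toCw hω) n) h2))
  | true =>
    exact decide_eq_true (S.pi_gt_q hρ (by show ω (0 + n) = true; rw [Nat.zero_add]; exact hb))

lemma mem_plus_iff (ω : ℕ → Bool) :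
    ω ∈ S.ip '' Icc (0:ℝ) 1 ↔ Cp (S.im S.q) (S.ip S.q) ω := by
  constructor
  · rintro ⟨x, hx, rfl⟩
    exact S.nec_plus hx
  · intro hω
    exact ⟨S.pi ω, S.pi_mem ω, S.realize_plus hω⟩

lemma mem_minus_iff (ω : ℕ → Bool) :
    ω ∈ S.im '' Icc (0:ℝ) 1 ↔ Cm (S.im S.q) (S.ip S.q) ω := by
  constructor
  · rintro ⟨x, hx, rfl⟩
    exact S.nec_minus hx
  · intro hω
    exact ⟨S.pi ω, S.pi_mem ω, S.realize_minus hω⟩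

end Sys

theorem main (SF SG : Sys) :
    (SF.ip '' Icc (0:ℝ) 1 = SG.ip '' Icc (0:ℝ) 1 ∧
     SF.im '' Icc (0:ℝ) 1 = SG.im '' Icc (0:ℝ) 1) ↔
    (SF.im SF.q = SG.im SG.q ∧ SF.ip SF.q = SG.ip SG.q) := by
  constructor
  · rintro ⟨hP, hM⟩
    constructor
    · -- α equal
      have key : ∀ A B : Sys, A.im '' Icc (0:ℝ) 1 = B.im '' Icc (0:ℝ) 1 →
          lexLe (A.im A.q) (B.im B.q) := by
        intro A B hAB
        have h1 : A.im A.q ∈ B.im '' Icc (0:ℝ) 1 := by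
          rw [← hAB]
          exact ⟨A.q, A.q_mem, rfl⟩
        obtain ⟨x, hx, hxe⟩ := h1
        have h0 : B.im x 0 = false := by
          rw [hxe]
          exact decide_eq_false (lt_irrefl A.q)
        have hxq : x ≤ B.q := by
          by_contra hc
          push_neg at hc
          have h2 : B.im x 0 = true := decide_eq_true (show B.q < B.Tm^[0] x from hc)
          rw [h0] at h2
          exact Bool.noConfusion h2
        have hle := B.tau_mono_mm hx B.q_mem hxq
        rwa [hxe] at hle
      exact lexLe_antisymm (key SF SG hM) (key SG SF hM.symm)
    · -- β equal
      have key : ∀ A B : Sys, A.ip '' Icc (0:ℝ) 1 = B.ip '' Icc (0:ℝ) 1 →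
          lexLe (B.ip B.q) (A.ip A.q) := by
        intro A B hAB
        have h1 : A.ip A.q ∈ B.ip '' Icc (0:ℝ) 1 := by
          rw [← hAB]
          exact ⟨A.q, A.q_mem, rfl⟩
        obtain ⟨x, hx, hxe⟩ := h1
        have h0 : B.ip x 0 = true := by
          rw [hxe]
          exact decide_eq_true (le_refl A.q)
        have hxq : B.q ≤ x := of_decide_eq_true h0
        have hle := B.tau_mono_pp B.q_mem hx hxq
        rwa [hxe] at hle
      exact lexLe_antisymm (key SG SF hP.symm) (key SF SG hP)
  · rintro ⟨hα, hβ⟩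
    constructor
    · apply Set.ext
      intro ω
      rw [SF.mem_plus_iff, SG.mem_plus_iff, hα, hβ]
    · apply Set.ext
      intro ω
      rw [SF.mem_minus_iff, SG.mem_minus_iff, hα, hβ]

end Stmt11

/-- The address spaces of two overlapping masked IFSs coincide iff their critical
itineraries coincide. -/
theorem stmt11
    (f0 f1 g0 g1 : ℝ → ℝ) (q : ℝ)
    (hf0m : StrictMonoOn f0 (Icc 0 1)) (hf1m : StrictMonoOn f1 (Icc 0 1))
    (hf0c : ContinuousOn f0 (Icc 0 1)) (hf1c : ContinuousOn f1 (Icc 0 1))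
    (hf0map : MapsTo f0 (Icc 0 1) (Icc 0 1)) (hf1map : MapsTo f1 (Icc 0 1) (Icc 0 1))
    (hf0lip : ∃ c, 0 ≤ c ∧ c < 1 ∧ ∀ x ∈ Icc (0:ℝ) 1, ∀ y ∈ Icc (0:ℝ) 1, |f0 x - f0 y| ≤ c * |x - y|)
    (hf1lip : ∃ c, 0 ≤ c ∧ c < 1 ∧ ∀ x ∈ Icc (0:ℝ) 1, ∀ y ∈ Icc (0:ℝ) 1, |f1 x - f1 y| ≤ c * |x - y|)
    (hf00 : f0 0 = 0) (hf11 : f1 1 = 1)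
    (hf10pos : 0 < f1 0) (hoverf0f1 : f1 0 < f0 1) (hf01lt : f0 1 < 1)
    (hq : q ∈ Ioo (f1 0) (f0 1))
    (hg0 : ∀ x ∈ Icc (0:ℝ) 1, g0 (f0 x) = x) (hg1 : ∀ x ∈ Icc (0:ℝ) 1, g1 (f1 x) = x)
    (e0 e1 k0 k1 : ℝ → ℝ) (p : ℝ)
    (he0m : StrictMonoOn e0 (Icc 0 1)) (he1m : StrictMonoOn e1 (Icc 0 1))
    (he0c : ContinuousOn e0 (Icc 0 1)) (he1c : ContinuousOn e1 (Icc 0 1))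
    (he0map : MapsTo e0 (Icc 0 1) (Icc 0 1)) (he1map : MapsTo e1 (Icc 0 1) (Icc 0 1))
    (he0lip : ∃ c, 0 ≤ c ∧ c < 1 ∧ ∀ x ∈ Icc (0:ℝ) 1, ∀ y ∈ Icc (0:ℝ) 1, |e0 x - e0 y| ≤ c * |x - y|)
    (he1lip : ∃ c, 0 ≤ c ∧ c < 1 ∧ ∀ x ∈ Icc (0:ℝ) 1, ∀ y ∈ Icc (0:ℝ) 1, |e1 x - e1 y| ≤ c * |x - y|)
    (he00 : e0 0 = 0) (he11 : e1 1 = 1)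
    (he10pos : 0 < e1 0) (hovere0e1 : e1 0 < e0 1) (he01lt : e0 1 < 1)
    (hp : p ∈ Ioo (e1 0) (e0 1))
    (hk0 : ∀ x ∈ Icc (0:ℝ) 1, k0 (e0 x) = x) (hk1 : ∀ x ∈ Icc (0:ℝ) 1, k1 (e1 x) = x) :
    (tauPlus g0 g1 q '' (Icc 0 1) = tauPlus k0 k1 p '' (Icc 0 1) ∧
     tauMinus g0 g1 q '' (Icc 0 1) = tauMinus k0 k1 p '' (Icc 0 1)) ↔
    (tauMinus g0 g1 q q = tauMinus k0 k1 p p ∧ tauPlus g0 g1 q q = tauPlus k0 k1 p p) := by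
  obtain ⟨cf0, hcf00, hcf01, hlf0⟩ := hf0lip
  obtain ⟨cf1, hcf10, hcf11, hlf1⟩ := hf1lip
  obtain ⟨ce0, hce00, hce01, hle0⟩ := he0lip
  obtain ⟨ce1, hce10, hce11, hle1⟩ := he1lip
  exact Stmt11.main
    { f0 := f0, f1 := f1, g0 := g0, g1 := g1, q := q, c := max cf0 cf1,
      hc0 := hcf00.trans (le_max_left _ _), hc1 := max_lt hcf01 hcf11,
      m0 := hf0m, m1 := hf1m, ct0 := hf0c, ct1 := hf1c, map0 := hf0map, map1 := hf1map,
      lip0 := fun x hx y hy => (hlf0 x hx y hy).trans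
        (mul_le_mul_of_nonneg_right (le_max_left _ _) (abs_nonneg _)),
      lip1 := fun x hx y hy => (hlf1 x hx y hy).trans
        (mul_le_mul_of_nonneg_right (le_max_right _ _) (abs_nonneg _)),
      f00 := hf00, f11 := hf11, f10pos := hf10pos, f01lt := hf01lt,
      q_lb := hq.1, q_ub := hq.2, gf0 := hg0, gf1 := hg1 }
    { f0 := e0, f1 := e1, g0 := k0, g1 := k1, q := p, c := max ce0 ce1,
      hc0 := hce00.trans (le_max_left _ _), hc1 := max_lt hce01 hce11,
      m0 := he0m, m1 := he1m, ct0 := he0c, ct1 := he1c, map0 := he0map, map1 := he1map,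
      lip0 := fun x hx y hy => (hle0 x hx y hy).trans
        (mul_le_mul_of_nonneg_right (le_max_left _ _) (abs_nonneg _)),
      lip1 := fun x hx y hy => (hle1 x hx y hy).trans
        (mul_le_mul_of_nonneg_right (le_max_right _ _) (abs_nonneg _)),
      f00 := he00, f11 := he11, f10pos := he10pos, f01lt := he01lt,
      q_lb := hp.1, q_ub := hp.2, gf0 := hk0, gf1 := hk1 }
end

section
/- Let F be an overlapping IFS with mask point q and critical itineraries α, β, and let Ω̄_q = Ω_q^+ ∪ Ω_q^-. Suppose there exists a ∈ (0,1) with π_a(α) = π_a(β), and let r be the minimum such a. Then for every a ∈ (0,r), the map π_a restricted to Ω̄_q is strictly increasing with respect to the lexicographic order, and for a = r it is (non-strictly) increasing. -/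
open Set Filter Topology

section piUaux
variable {a : ℝ}

lemma term_nonneg (ha0 : 0 ≤ a) (ω : ℕ → Bool) (k : ℕ) : 0 ≤ (cond (ω k) (a ^ k) 0 : ℝ) := by
  cases h : ω k <;> simp [pow_nonneg ha0]

lemma term_le (ha0 : 0 ≤ a) (ω : ℕ → Bool) (k : ℕ) : (cond (ω k) (a ^ k) 0 : ℝ) ≤ a ^ k := by
  cases h : ω k <;> simp [pow_nonneg ha0]

lemma summable_term (ha0 : 0 ≤ a) (ha1 : a < 1) (ω : ℕ → Bool) :
    Summable (fun k => (cond (ω k) (a ^ k) 0 : ℝ)) :=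
  Summable.of_nonneg_of_le (term_nonneg ha0 ω) (term_le ha0 ω)
    (summable_geometric_of_lt_one ha0 ha1)

lemma piU_nonneg (ha0 : 0 ≤ a) (ha1 : a ≤ 1) (ω : ℕ → Bool) : 0 ≤ piU a ω := by
  apply mul_nonneg (by linarith)
  exact tsum_nonneg (term_nonneg ha0 ω)

lemma piU_le_one (ha0 : 0 ≤ a) (ha1 : a < 1) (ω : ℕ → Bool) : piU a ω ≤ 1 := by
  have h1 : ∑' k : ℕ, (cond (ω k) (a ^ k) 0 : ℝ) ≤ ∑' k : ℕ, a ^ k :=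
    Summable.tsum_le_tsum (term_le ha0 ω) (summable_term ha0 ha1 ω) (summable_geometric_of_lt_one ha0 ha1)
  have h2 : ∑' k : ℕ, a ^ k = (1 - a)⁻¹ := tsum_geometric_of_lt_one ha0 ha1
  have h3 : (0:ℝ) < 1 - a := by linarith
  calc piU a ω ≤ (1 - a) * (1 - a)⁻¹ := by
        unfold piU; rw [← h2]; exact mul_le_mul_of_nonneg_left h1 (le_of_lt h3)
    _ = 1 := mul_inv_cancel₀ (ne_of_gt h3)

lemma piU_split (ha0 : 0 ≤ a) (ha1 : a < 1) (ω : ℕ → Bool) (k : ℕ) :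
    piU a ω = (1 - a) * (∑ j ∈ Finset.range k, (cond (ω j) (a ^ j) 0 : ℝ))
      + a ^ k * piU a (shiftn k ω) := by
  have hs := summable_term ha0 ha1 ω
  have hsplit := Summable.sum_add_tsum_nat_add k hs
  have hterm : ∀ i : ℕ, (cond (ω (i + k)) (a ^ (i + k)) 0 : ℝ)
      = a ^ k * cond (shiftn k ω i) (a ^ i) 0 := by
    intro i
    simp only [shiftn]
    cases h : ω (i + k) <;> simp [pow_add, mul_comm]
  unfold piU
  rw [← hsplit]
  have : ∑' i : ℕ, (cond (ω (i + k)) (a ^ (i + k)) 0 : ℝ)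
      = a ^ k * ∑' i : ℕ, (cond (shiftn k ω i) (a ^ i) 0 : ℝ) := by
    rw [← tsum_mul_left]; exact tsum_congr hterm
  rw [this]; ring

lemma piU_diff (ha0 : 0 ≤ a) (ha1 : a < 1) (σ ω : ℕ → Bool) (k : ℕ)
    (hagree : ∀ j < k, σ j = ω j) :
    piU a ω - piU a σ = a ^ k * (piU a (shiftn k ω) - piU a (shiftn k σ)) := by
  rw [piU_split ha0 ha1 ω k, piU_split ha0 ha1 σ k]
  have : (∑ j ∈ Finset.range k, (cond (ω j) (a ^ j) 0 : ℝ))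
      = ∑ j ∈ Finset.range k, (cond (σ j) (a ^ j) 0 : ℝ) := by
    apply Finset.sum_congr rfl
    intro j hj
    rw [hagree j (Finset.mem_range.mp hj)]
  rw [this]; ring

lemma piU_ge_of_true (ha0 : 0 ≤ a) (ha1 : a < 1) (ω : ℕ → Bool) (h : ω 0 = true) :
    1 - a ≤ piU a ω := by
  have := piU_split ha0 ha1 ω 1
  rw [this]
  have h1 : (∑ j ∈ Finset.range 1, (cond (ω j) (a ^ j) 0 : ℝ)) = 1 := by simp [h]
  rw [h1]
  nlinarith [piU_nonneg ha0 ha1.le (shiftn 1 ω), pow_nonneg ha0 1]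

lemma piU_le_of_false (ha0 : 0 ≤ a) (ha1 : a < 1) (σ : ℕ → Bool) (h : σ 0 = false) :
    piU a σ ≤ a := by
  have := piU_split ha0 ha1 σ 1
  rw [this]
  have h1 : (∑ j ∈ Finset.range 1, (cond (σ j) (a ^ j) 0 : ℝ)) = 0 := by simp [h]
  rw [h1]
  nlinarith [piU_le_one ha0 ha1 (shiftn 1 σ)]

end piUaux

section lip

lemma pow_diff_bound {c d c₁ : ℝ} (hc0 : 0 ≤ c) (hc : c ≤ c₁) (hd0 : 0 ≤ d) (hd : d ≤ c₁) :
    ∀ k : ℕ, |c ^ k - d ^ k| * c₁ ≤ (k : ℝ) * c₁ ^ k * |c - d| := by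
  intro k
  induction k with
  | zero => simp
  | succ k ih =>
    have h1 : c ^ (k+1) - d ^ (k+1) = c * (c ^ k - d ^ k) + (c - d) * d ^ k := by ring
    have h2 : |c ^ (k+1) - d ^ (k+1)| ≤ c * |c ^ k - d ^ k| + |c - d| * d ^ k := by
      rw [h1]
      refine (abs_add_le _ _).trans ?_
      rw [abs_mul, abs_mul, abs_of_nonneg hc0, abs_of_nonneg (pow_nonneg hd0 k)]
    have hc₁0 : 0 ≤ c₁ := le_trans hc0 hc
    have hdk : d ^ k ≤ c₁ ^ k := pow_le_pow_left₀ hd0 hd k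
    have habs : 0 ≤ |c ^ k - d ^ k| := abs_nonneg _
    have habs2 : 0 ≤ |c - d| := abs_nonneg _
    have hck : 0 ≤ c₁ ^ k := pow_nonneg hc₁0 k
    have key : c * |c ^ k - d ^ k| * c₁ ≤ c₁ * ((k : ℝ) * c₁ ^ k * |c - d|) := by
      have t1 : c * |c ^ k - d ^ k| * c₁ ≤ c₁ * (|c ^ k - d ^ k| * c₁) := by
        have := mul_le_mul_of_nonneg_right (mul_le_mul_of_nonneg_right hc habs) hc₁0
        linarith [this]
      have t2 : c₁ * (|c ^ k - d ^ k| * c₁) ≤ c₁ * ((k : ℝ) * c₁ ^ k * |c - d|) :=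
        mul_le_mul_of_nonneg_left ih hc₁0
      linarith
    have key2 : |c - d| * d ^ k * c₁ ≤ |c - d| * c₁ ^ (k+1) := by
      rw [pow_succ]
      have h3 : d ^ k * c₁ ≤ c₁ ^ k * c₁ := mul_le_mul_of_nonneg_right hdk hc₁0
      have := mul_le_mul_of_nonneg_left h3 habs2
      linarith [this]
    push_cast
    calc |c ^ (k+1) - d ^ (k+1)| * c₁ ≤ (c * |c ^ k - d ^ k| + |c - d| * d ^ k) * c₁ := by nlinarith
      _ = c * |c ^ k - d ^ k| * c₁ + |c - d| * d ^ k * c₁ := by ring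
      _ ≤ c₁ * ((k : ℝ) * c₁ ^ k * |c - d|) + |c - d| * c₁ ^ (k+1) := add_le_add key key2
      _ = ((k : ℝ) + 1) * c₁ ^ (k+1) * |c - d| := by rw [pow_succ]; ring

lemma piU_lipschitz {c₁ : ℝ} (h0 : 0 < c₁) (h1 : c₁ < 1) :
    ∃ K : ℝ, 0 ≤ K ∧ ∀ (ω : ℕ → Bool) (c d : ℝ), c ∈ Icc 0 c₁ → d ∈ Icc 0 c₁ →
      |piU c ω - piU d ω| ≤ K * |c - d| := by
  have hc₁ : ‖c₁‖ < 1 := by rw [Real.norm_eq_abs, abs_of_nonneg h0.le]; exact h1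
  have s1 : Summable (fun k : ℕ => (k : ℝ) * c₁ ^ k) := by
    have := summable_pow_mul_geometric_of_norm_lt_one 1 hc₁
    simpa using this
  have s2 : Summable (fun k : ℕ => ((k : ℝ) + 1) * c₁ ^ (k+1)) := by
    have := (summable_nat_add_iff (f := fun k : ℕ => (k : ℝ) * c₁ ^ k) 1).mpr s1
    refine this.congr ?_
    intro n; push_cast; ring
  have sh : Summable (fun k : ℕ => (k : ℝ) * c₁ ^ k + ((k : ℝ) + 1) * c₁ ^ (k+1)) := s1.add s2
  set S : ℝ := ∑' k : ℕ, ((k : ℝ) * c₁ ^ k + ((k : ℝ) + 1) * c₁ ^ (k+1)) with hS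
  have hSnn : 0 ≤ S := tsum_nonneg (fun k => by positivity)
  refine ⟨S / c₁, div_nonneg hSnn h0.le, ?_⟩
  intro ω c d hc hd
  obtain ⟨hc0, hcc⟩ := hc
  obtain ⟨hd0, hdc⟩ := hd
  have hc1 : c < 1 := lt_of_le_of_lt hcc h1
  have hd1 : d < 1 := lt_of_le_of_lt hdc h1
  have sumc : Summable (fun k : ℕ => (1 - c) * (cond (ω k) (c ^ k) 0 : ℝ)) :=
    (summable_term hc0 hc1 ω).mul_left _
  have sumd : Summable (fun k : ℕ => (1 - d) * (cond (ω k) (d ^ k) 0 : ℝ)) :=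
    (summable_term hd0 hd1 ω).mul_left _
  have e1 : piU c ω = ∑' k : ℕ, (1 - c) * (cond (ω k) (c ^ k) 0 : ℝ) := by
    unfold piU; rw [tsum_mul_left]
  have e2 : piU d ω = ∑' k : ℕ, (1 - d) * (cond (ω k) (d ^ k) 0 : ℝ) := by
    unfold piU; rw [tsum_mul_left]
  have ediff : piU c ω - piU d ω
      = ∑' k : ℕ, ((1 - c) * (cond (ω k) (c ^ k) 0 : ℝ) - (1 - d) * (cond (ω k) (d ^ k) 0 : ℝ)) := by
    rw [e1, e2, Summable.tsum_sub sumc sumd]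
  have hbound : ∀ k : ℕ, |(1 - c) * (cond (ω k) (c ^ k) 0 : ℝ) - (1 - d) * (cond (ω k) (d ^ k) 0 : ℝ)|
      ≤ ((k : ℝ) * c₁ ^ k + ((k : ℝ) + 1) * c₁ ^ (k+1)) / c₁ * |c - d| := by
    intro k
    have hpos : 0 ≤ ((k : ℝ) * c₁ ^ k + ((k : ℝ) + 1) * c₁ ^ (k+1)) / c₁ * |c - d| := by positivity
    cases h : ω k
    · simpa using hpos
    · simp only [cond]
      have key1 := pow_diff_bound hc0 hcc hd0 hdc k
      have key2 := pow_diff_bound hc0 hcc hd0 hdc (k+1)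
      have e3 : (1 - c) * c ^ k - (1 - d) * d ^ k = (c ^ k - d ^ k) - (c ^ (k+1) - d ^ (k+1)) := by
        ring
      rw [e3]
      refine (abs_sub _ _).trans ?_
      rw [div_mul_eq_mul_div, le_div_iff₀ h0, add_mul]
      push_cast at key2 ⊢
      nlinarith [abs_nonneg (c ^ k - d ^ k), abs_nonneg (c ^ (k+1) - d ^ (k+1))]
  have habs_sum : Summable (fun k : ℕ =>
      |(1 - c) * (cond (ω k) (c ^ k) 0 : ℝ) - (1 - d) * (cond (ω k) (d ^ k) 0 : ℝ)|) := by
    refine Summable.of_nonneg_of_le (fun k => abs_nonneg _) hbound ?_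
    refine Summable.mul_right _ (sh.div_const _)
  have habs_sum' : Summable (fun k : ℕ =>
      ‖(1 - c) * (cond (ω k) (c ^ k) 0 : ℝ) - (1 - d) * (cond (ω k) (d ^ k) 0 : ℝ)‖) := by
    simpa only [Real.norm_eq_abs] using habs_sum
  have step1 : |piU c ω - piU d ω|
      ≤ ∑' k : ℕ, |(1 - c) * (cond (ω k) (c ^ k) 0 : ℝ) - (1 - d) * (cond (ω k) (d ^ k) 0 : ℝ)| := by
    rw [ediff]
    have := norm_tsum_le_tsum_norm habs_sum'
    simpa only [Real.norm_eq_abs] using this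
  have hsum2 : Summable (fun k : ℕ =>
      ((k : ℝ) * c₁ ^ k + ((k : ℝ) + 1) * c₁ ^ (k+1)) / c₁ * |c - d|) :=
    Summable.mul_right _ (sh.div_const _)
  have step2 : ∑' k : ℕ, |(1 - c) * (cond (ω k) (c ^ k) 0 : ℝ) - (1 - d) * (cond (ω k) (d ^ k) 0 : ℝ)|
      ≤ ∑' k : ℕ, ((k : ℝ) * c₁ ^ k + ((k : ℝ) + 1) * c₁ ^ (k+1)) / c₁ * |c - d| :=
    Summable.tsum_le_tsum hbound habs_sum hsum2
  have step3 : ∑' k : ℕ, ((k : ℝ) * c₁ ^ k + ((k : ℝ) + 1) * c₁ ^ (k+1)) / c₁ * |c - d|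
      = S / c₁ * |c - d| := by
    rw [tsum_mul_right, tsum_div_const]
  linarith

end lip
section dyn
variable (g0 g1 : ℝ → ℝ) (q : ℝ)

/-- side symbol -/
noncomputable def sd (s : Bool) (x : ℝ) : Bool := if s then decide (q ≤ x) else decide (q < x)

/-- parametrized dynamics -/
noncomputable def Ts (s : Bool) : ℝ → ℝ := if s then Tplus g0 g1 q else Tminus g0 g1 q

/-- parametrized itinerary -/
noncomputable def tauS (s : Bool) : ℝ → ℕ → Bool := if s then tauPlus g0 g1 q else tauMinus g0 g1 q

/-- point-with-sign relation -/
def PRel (x y : ℝ) (s t : Bool) : Prop := x < y ∨ (x = y ∧ (s = true → t = true))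

lemma Ts_eq (s : Bool) (x : ℝ) : Ts g0 g1 q s x = cond (sd q s x) (g1 x) (g0 x) := by
  cases s
  · by_cases h : q < x
    · simp [Ts, Tminus, sd, h, not_le.mpr h]
    · simp [Ts, Tminus, sd, h, not_lt.mp h]
  · by_cases h : q ≤ x
    · simp [Ts, Tplus, sd, h, not_lt.mpr h]
    · simp [Ts, Tplus, sd, h, not_le.mp h]

lemma tauS_apply (s : Bool) (x : ℝ) (n : ℕ) :
    tauS g0 g1 q s x n = sd q s ((Ts g0 g1 q s)^[n] x) := by
  cases s <;> rfl

lemma sd_true_ge {s : Bool} {x : ℝ} (h : sd q s x = true) : q ≤ x := by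
  cases s <;> simp [sd] at h
  · exact h.le
  · exact h

lemma sd_false_le {s : Bool} {x : ℝ} (h : sd q s x = false) : x ≤ q := by
  cases s <;> simp [sd] at h
  · exact h
  · exact h.le

variable {g0 g1 : ℝ → ℝ} {q B0 B1 : ℝ}

lemma Ts_mem
    (hq1 : B1 < q) (hq2 : q < B0)
    (H0m : ∀ u : ℝ, 0 ≤ u → u ≤ B0 → g0 u ∈ Icc (0:ℝ) 1)
    (H1m : ∀ u : ℝ, B1 ≤ u → u ≤ 1 → g1 u ∈ Icc (0:ℝ) 1)
    (s : Bool) {x : ℝ} (hx : x ∈ Icc (0:ℝ) 1) : Ts g0 g1 q s x ∈ Icc (0:ℝ) 1 := by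
  rw [Ts_eq]
  cases h : sd q s x
  · have hxq : x ≤ q := sd_false_le q h
    simpa using H0m x hx.1 (le_trans hxq hq2.le)
  · have hxq : q ≤ x := sd_true_ge q h
    simpa using H1m x (le_trans hq1.le hxq) hx.2

lemma iter_mem
    (hq1 : B1 < q) (hq2 : q < B0)
    (H0m : ∀ u : ℝ, 0 ≤ u → u ≤ B0 → g0 u ∈ Icc (0:ℝ) 1)
    (H1m : ∀ u : ℝ, B1 ≤ u → u ≤ 1 → g1 u ∈ Icc (0:ℝ) 1)
    (s : Bool) {x : ℝ} (hx : x ∈ Icc (0:ℝ) 1) (n : ℕ) : (Ts g0 g1 q s)^[n] x ∈ Icc (0:ℝ) 1 := by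
  induction n with
  | zero => simpa using hx
  | succ n ih =>
    rw [Function.iterate_succ_apply']
    exact Ts_mem hq1 hq2 H0m H1m s ih

lemma step_sd {x y : ℝ} {s t : Bool} (hrel : PRel x y s t)
    (h : sd q s x = true) : sd q t y = true := by
  rcases hrel with hlt | ⟨heq, himp⟩
  · have hqx : q ≤ x := sd_true_ge q h
    cases t <;> simp [sd] <;> [exact lt_of_le_of_lt hqx hlt; exact (lt_of_le_of_lt hqx hlt).le]
  · subst heq
    cases s
    · have : q < x := by simpa [sd] using h
      cases t <;> simp [sd] <;> [exact this; exact this.le]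
    · have ht : t = true := himp rfl
      subst ht; exact h

lemma step_rel
    (hq1 : B1 < q) (hq2 : q < B0)
    (H0s : ∀ u v : ℝ, 0 ≤ u → u < v → v ≤ B0 → g0 u < g0 v)
    (H1s : ∀ u v : ℝ, B1 ≤ u → u < v → v ≤ 1 → g1 u < g1 v)
    {x y : ℝ} {s t : Bool} (hx : x ∈ Icc (0:ℝ) 1) (hy : y ∈ Icc (0:ℝ) 1)
    (hrel : PRel x y s t) (hsd : sd q s x = sd q t y) :
    PRel (Ts g0 g1 q s x) (Ts g0 g1 q t y) s t := by
  rw [Ts_eq, Ts_eq, ← hsd]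
  rcases hrel with hlt | ⟨heq, himp⟩
  · cases h : sd q s x
    · have hyq : y ≤ q := sd_false_le q (hsd.symm.trans h)
      left
      simpa using H0s x y hx.1 hlt (le_trans hyq hq2.le)
    · have hqx : q ≤ x := sd_true_ge q h
      left
      simpa using H1s x y (le_trans hq1.le hqx) hlt hy.2
  · subst heq
    exact Or.inr ⟨rfl, himp⟩

lemma iter_rel
    (hq1 : B1 < q) (hq2 : q < B0)
    (H0s : ∀ u v : ℝ, 0 ≤ u → u < v → v ≤ B0 → g0 u < g0 v)
    (H0m : ∀ u : ℝ, 0 ≤ u → u ≤ B0 → g0 u ∈ Icc (0:ℝ) 1)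
    (H1s : ∀ u v : ℝ, B1 ≤ u → u < v → v ≤ 1 → g1 u < g1 v)
    (H1m : ∀ u : ℝ, B1 ≤ u → u ≤ 1 → g1 u ∈ Icc (0:ℝ) 1)
    {x y : ℝ} {s t : Bool} (hx : x ∈ Icc (0:ℝ) 1) (hy : y ∈ Icc (0:ℝ) 1)
    (hrel : PRel x y s t) (n : ℕ)
    (hagree : ∀ j < n, tauS g0 g1 q s x j = tauS g0 g1 q t y j) :
    PRel ((Ts g0 g1 q s)^[n] x) ((Ts g0 g1 q t)^[n] y) s t := by
  induction n with
  | zero => simpa using hrel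
  | succ n ih =>
    have prev := ih (fun j hj => hagree j (Nat.lt_succ_of_lt hj))
    have hsd : sd q s ((Ts g0 g1 q s)^[n] x) = sd q t ((Ts g0 g1 q t)^[n] y) := by
      have := hagree n (Nat.lt_succ_self n)
      rwa [tauS_apply, tauS_apply] at this
    rw [Function.iterate_succ_apply', Function.iterate_succ_apply']
    exact step_rel hq1 hq2 H0s H1s (iter_mem hq1 hq2 H0m H1m s hx n)
      (iter_mem hq1 hq2 H0m H1m t hy n) prev hsd

lemma tau_mono
    (hq1 : B1 < q) (hq2 : q < B0)
    (H0s : ∀ u v : ℝ, 0 ≤ u → u < v → v ≤ B0 → g0 u < g0 v)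
    (H0m : ∀ u : ℝ, 0 ≤ u → u ≤ B0 → g0 u ∈ Icc (0:ℝ) 1)
    (H1s : ∀ u v : ℝ, B1 ≤ u → u < v → v ≤ 1 → g1 u < g1 v)
    (H1m : ∀ u : ℝ, B1 ≤ u → u ≤ 1 → g1 u ∈ Icc (0:ℝ) 1)
    {x y : ℝ} {s t : Bool} (hx : x ∈ Icc (0:ℝ) 1) (hy : y ∈ Icc (0:ℝ) 1)
    (hrel : PRel x y s t) :
    lexLe (tauS g0 g1 q s x) (tauS g0 g1 q t y) := by
  by_cases heq : tauS g0 g1 q s x = tauS g0 g1 q t y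
  · exact Or.inr heq
  · left
    have hex : ∃ n, tauS g0 g1 q s x n ≠ tauS g0 g1 q t y n := Function.ne_iff.mp heq
    classical
    let k := Nat.find hex
    have hkne : tauS g0 g1 q s x k ≠ tauS g0 g1 q t y k := Nat.find_spec hex
    have hagree : ∀ j < k, tauS g0 g1 q s x j = tauS g0 g1 q t y j := by
      intro j hj
      by_contra hne
      exact absurd hj (not_lt.mpr (Nat.find_le hne))
    refine ⟨k, hagree, ?_⟩
    have hrelk := iter_rel hq1 hq2 H0s H0m H1s H1m hx hy hrel k hagree
    have himp : tauS g0 g1 q s x k = true → tauS g0 g1 q t y k = true := by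
      intro h
      rw [tauS_apply] at h ⊢
      exact step_sd hrelk h
    cases hσ : tauS g0 g1 q s x k
    · cases hω : tauS g0 g1 q t y k
      · exact absurd (hσ.trans hω.symm) hkne
      · exact Bool.false_lt_true
    · exact absurd (hσ.trans (himp hσ).symm) hkne

lemma shiftn_tauS (s : Bool) (x : ℝ) (k : ℕ) :
    shiftn k (tauS g0 g1 q s x) = tauS g0 g1 q s ((Ts g0 g1 q s)^[k] x) := by
  funext n
  rw [shiftn, tauS_apply, tauS_apply, Function.iterate_add_apply]

lemma tail_le_alpha
    (hq1 : B1 < q) (hq2 : q < B0)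
    (H0s : ∀ u v : ℝ, 0 ≤ u → u < v → v ≤ B0 → g0 u < g0 v)
    (H0m : ∀ u : ℝ, 0 ≤ u → u ≤ B0 → g0 u ∈ Icc (0:ℝ) 1)
    (H1s : ∀ u v : ℝ, B1 ≤ u → u < v → v ≤ 1 → g1 u < g1 v)
    (H1m : ∀ u : ℝ, B1 ≤ u → u ≤ 1 → g1 u ∈ Icc (0:ℝ) 1)
    (hq01 : q ∈ Icc (0:ℝ) 1) {s : Bool} {x : ℝ} {k : ℕ} (hx : x ∈ Icc (0:ℝ) 1)
    (h : tauS g0 g1 q s x k = false) :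
    lexLe (shiftn k (tauS g0 g1 q s x)) (tauS g0 g1 q false q) := by
  rw [shiftn_tauS]
  have hxk := iter_mem hq1 hq2 H0m H1m s hx k
  apply tau_mono hq1 hq2 H0s H0m H1s H1m hxk hq01
  have hsd : sd q s ((Ts g0 g1 q s)^[k] x) = false := by rw [tauS_apply] at h; exact h
  rcases lt_or_eq_of_le (sd_false_le q hsd) with hlt | heq
  · exact Or.inl hlt
  · refine Or.inr ⟨heq, fun hs => ?_⟩
    rw [heq, hs] at hsd
    simp [sd] at hsd

lemma beta_le_tail
    (hq1 : B1 < q) (hq2 : q < B0)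
    (H0s : ∀ u v : ℝ, 0 ≤ u → u < v → v ≤ B0 → g0 u < g0 v)
    (H0m : ∀ u : ℝ, 0 ≤ u → u ≤ B0 → g0 u ∈ Icc (0:ℝ) 1)
    (H1s : ∀ u v : ℝ, B1 ≤ u → u < v → v ≤ 1 → g1 u < g1 v)
    (H1m : ∀ u : ℝ, B1 ≤ u → u ≤ 1 → g1 u ∈ Icc (0:ℝ) 1)
    (hq01 : q ∈ Icc (0:ℝ) 1) {s : Bool} {x : ℝ} {k : ℕ} (hx : x ∈ Icc (0:ℝ) 1)
    (h : tauS g0 g1 q s x k = true) :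
    lexLe (tauS g0 g1 q true q) (shiftn k (tauS g0 g1 q s x)) := by
  rw [shiftn_tauS]
  have hxk := iter_mem hq1 hq2 H0m H1m s hx k
  apply tau_mono hq1 hq2 H0s H0m H1s H1m hq01 hxk
  have hsd : sd q s ((Ts g0 g1 q s)^[k] x) = true := by rw [tauS_apply] at h; exact h
  rcases (sd_true_ge q hsd).lt_or_eq with hlt | heq
  · exact Or.inl hlt
  · refine Or.inr ⟨heq, fun _ => ?_⟩
    cases s
    · rw [← heq] at hsd
      simp [sd] at hsd
    · rfl

end dyn
set_option maxHeartbeats 2000000 in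
/-- If `r` is the least `a ∈ (0,1)` with `π_a(α) = π_a(β)`, then `π_a` is strictly
increasing on `Ω̄_q` for `0 < a < r` and increasing for `a = r`. -/
theorem stmt13
    (f0 f1 g0 g1 : ℝ → ℝ) (q : ℝ)
    (hf0m : StrictMonoOn f0 (Icc 0 1)) (hf1m : StrictMonoOn f1 (Icc 0 1))
    (hf0c : ContinuousOn f0 (Icc 0 1)) (hf1c : ContinuousOn f1 (Icc 0 1))
    (hf0map : MapsTo f0 (Icc 0 1) (Icc 0 1)) (hf1map : MapsTo f1 (Icc 0 1) (Icc 0 1))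
    (hf0lip : ∃ c, 0 ≤ c ∧ c < 1 ∧ ∀ x ∈ Icc (0:ℝ) 1, ∀ y ∈ Icc (0:ℝ) 1, |f0 x - f0 y| ≤ c * |x - y|)
    (hf1lip : ∃ c, 0 ≤ c ∧ c < 1 ∧ ∀ x ∈ Icc (0:ℝ) 1, ∀ y ∈ Icc (0:ℝ) 1, |f1 x - f1 y| ≤ c * |x - y|)
    (hf00 : f0 0 = 0) (hf11 : f1 1 = 1)
    (hf10pos : 0 < f1 0) (hoverf0f1 : f1 0 < f0 1) (hf01lt : f0 1 < 1)
    (hq : q ∈ Ioo (f1 0) (f0 1))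
    (hg0 : ∀ x ∈ Icc (0:ℝ) 1, g0 (f0 x) = x) (hg1 : ∀ x ∈ Icc (0:ℝ) 1, g1 (f1 x) = x)
    (r : ℝ) (hr0 : 0 < r) (hr1 : r < 1)
    (hre : piU r (tauMinus g0 g1 q q) = piU r (tauPlus g0 g1 q q))
    (hrmin : ∀ a : ℝ, 0 < a → a < 1 →
      piU a (tauMinus g0 g1 q q) = piU a (tauPlus g0 g1 q q) → r ≤ a) :
    (∀ a : ℝ, 0 < a → a < r →
      ∀ σ ∈ tauPlus g0 g1 q '' (Icc 0 1) ∪ tauMinus g0 g1 q '' (Icc 0 1),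
      ∀ ω ∈ tauPlus g0 g1 q '' (Icc 0 1) ∪ tauMinus g0 g1 q '' (Icc 0 1),
        lexLt σ ω → piU a σ < piU a ω) ∧
    (∀ σ ∈ tauPlus g0 g1 q '' (Icc 0 1) ∪ tauMinus g0 g1 q '' (Icc 0 1),
     ∀ ω ∈ tauPlus g0 g1 q '' (Icc 0 1) ∪ tauMinus g0 g1 q '' (Icc 0 1),
        lexLe σ ω → piU r σ ≤ piU r ω) := by
  classical
  obtain ⟨hq1, hq2⟩ := hq
  have hq0 : (0:ℝ) < q := hf10pos.trans hq1
  have hqlt1 : q < 1 := hq2.trans hf01lt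
  have hq01 : q ∈ Icc (0:ℝ) 1 := ⟨hq0.le, hqlt1.le⟩
  -- surjectivity of f0, f1 onto the relevant ranges
  have hsur0 : ∀ u : ℝ, 0 ≤ u → u ≤ f0 1 → ∃ x ∈ Icc (0:ℝ) 1, f0 x = u := by
    intro u h1 h2
    have hsub := intermediate_value_Icc (by norm_num : (0:ℝ) ≤ 1) hf0c
    have hmem : u ∈ Icc (f0 0) (f0 1) := by rw [hf00]; exact ⟨h1, h2⟩
    obtain ⟨x, hx, hfx⟩ := hsub hmem
    exact ⟨x, hx, hfx⟩
  have hsur1 : ∀ u : ℝ, f1 0 ≤ u → u ≤ 1 → ∃ x ∈ Icc (0:ℝ) 1, f1 x = u := by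
    intro u h1 h2
    have hsub := intermediate_value_Icc (by norm_num : (0:ℝ) ≤ 1) hf1c
    have hmem : u ∈ Icc (f1 0) (f1 1) := by rw [hf11]; exact ⟨h1, h2⟩
    obtain ⟨x, hx, hfx⟩ := hsub hmem
    exact ⟨x, hx, hfx⟩
  have H0m : ∀ u : ℝ, 0 ≤ u → u ≤ f0 1 → g0 u ∈ Icc (0:ℝ) 1 := by
    intro u h1 h2
    obtain ⟨x, hx, hfx⟩ := hsur0 u h1 h2
    rw [← hfx, hg0 x hx]; exact hx
  have H1m : ∀ u : ℝ, f1 0 ≤ u → u ≤ 1 → g1 u ∈ Icc (0:ℝ) 1 := by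
    intro u h1 h2
    obtain ⟨x, hx, hfx⟩ := hsur1 u h1 h2
    rw [← hfx, hg1 x hx]; exact hx
  have H0s : ∀ u v : ℝ, 0 ≤ u → u < v → v ≤ f0 1 → g0 u < g0 v := by
    intro u v h1 h2 h3
    obtain ⟨x, hx, hfx⟩ := hsur0 u h1 (le_trans h2.le h3)
    obtain ⟨y, hy, hfy⟩ := hsur0 v (le_trans h1 h2.le) h3
    rw [← hfx, ← hfy, hg0 x hx, hg0 y hy]
    by_contra hcon
    push_neg at hcon
    rcases hcon.lt_or_eq with hlt | heq
    · have := hf0m hy hx hlt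
      rw [hfx, hfy] at this; linarith
    · rw [heq, hfx] at hfy; linarith
  have H1s : ∀ u v : ℝ, f1 0 ≤ u → u < v → v ≤ 1 → g1 u < g1 v := by
    intro u v h1 h2 h3
    obtain ⟨x, hx, hfx⟩ := hsur1 u h1 (le_trans h2.le h3)
    obtain ⟨y, hy, hfy⟩ := hsur1 v (le_trans h1 h2.le) h3
    rw [← hfx, ← hfy, hg1 x hx, hg1 y hy]
    by_contra hcon
    push_neg at hcon
    rcases hcon.lt_or_eq with hlt | heq
    · have := hf1m hy hx hlt
      rw [hfx, hfy] at this; linarith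
    · rw [heq, hfx] at hfy; linarith
  -- abbreviations
  set α := tauMinus g0 g1 q q with hαdef
  set β := tauPlus g0 g1 q q with hβdef
  have hα0 : α 0 = false := by simp [hαdef, tauMinus]
  have hβ0 : β 0 = true := by simp [hβdef, tauPlus]
  have hαβ : lexLt α β := ⟨0, fun j hj => absurd hj (Nat.not_lt_zero j),
    by rw [hα0, hβ0]; exact Bool.false_lt_true⟩
  set Adm : (ℕ → Bool) → Prop := fun ω => ∃ s x, x ∈ Icc (0:ℝ) 1 ∧ ω = tauS g0 g1 q s x
    with hAdmdef
  have hmemAdm : ∀ σ ∈ tauPlus g0 g1 q '' (Icc 0 1) ∪ tauMinus g0 g1 q '' (Icc 0 1), Adm σ := by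
    rintro σ (⟨x, hx, rfl⟩ | ⟨x, hx, rfl⟩)
    · exact ⟨true, x, hx, rfl⟩
    · exact ⟨false, x, hx, rfl⟩
  have hAdmα : Adm α := ⟨false, q, hq01, rfl⟩
  have hAdmβ : Adm β := ⟨true, q, hq01, rfl⟩
  have hAdmshift : ∀ ω, Adm ω → ∀ k, Adm (shiftn k ω) := by
    rintro ω ⟨s, x, hx, rfl⟩ k
    exact ⟨s, _, iter_mem hq1 hq2 H0m H1m s hx k, shiftn_tauS s x k⟩
  have htail0 : ∀ ω, Adm ω → ∀ k, ω k = false → lexLe (shiftn k ω) α := by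
    rintro ω ⟨s, x, hx, rfl⟩ k hk
    exact tail_le_alpha hq1 hq2 H0s H0m H1s H1m hq01 hx hk
  have htail1 : ∀ ω, Adm ω → ∀ k, ω k = true → lexLe β (shiftn k ω) := by
    rintro ω ⟨s, x, hx, rfl⟩ k hk
    exact beta_le_tail hq1 hq2 H0s H0m H1s H1m hq01 hx hk
  -- crude monotonicity for small parameters
  have hcrude : ∀ b : ℝ, 0 < b → b < 1/2 → ∀ σ ω : ℕ → Bool, lexLt σ ω → piU b σ < piU b ω := by
    rintro b hb0 hbh σ ω ⟨k, hagree, hklt⟩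
    obtain ⟨hkσ, hkω⟩ := Bool.lt_iff.mp hklt
    have hb1 : b < 1 := by linarith
    have hdiff := piU_diff hb0.le hb1 σ ω k hagree
    have h1 : 1 - b ≤ piU b (shiftn k ω) :=
      piU_ge_of_true hb0.le hb1 _ (by simpa [shiftn] using hkω)
    have h2 : piU b (shiftn k σ) ≤ b :=
      piU_le_of_false hb0.le hb1 _ (by simpa [shiftn] using hkσ)
    have hpk : 0 < b ^ k := pow_pos hb0 k
    nlinarith
  -- Lipschitz constant on [0, c₁]
  set c₁ : ℝ := (1 + r) / 2 with hc₁def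
  have hc₁0 : 0 < c₁ := by rw [hc₁def]; linarith
  have hc₁1 : c₁ < 1 := by rw [hc₁def]; linarith
  have hrc₁ : r < c₁ := by rw [hc₁def]; linarith
  obtain ⟨K, hK0, hKlip⟩ := piU_lipschitz hc₁0 hc₁1
  -- left-limit transfer
  have hleft : ∀ (σ ω : ℕ → Bool) (b : ℝ), 0 < b → b ≤ c₁ →
      (∀ c : ℝ, 0 < c → c < b → piU c σ ≤ piU c ω) → piU b σ ≤ piU b ω := by
    intro σ ω b hb0 hbc h
    by_contra hcon
    push_neg at hcon
    set δ := piU b σ - piU b ω with hδdef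
    have hδ0 : 0 < δ := by rw [hδdef]; linarith
    have h2K1 : (0:ℝ) < 2*K+1 := by linarith
    set c := max (b/2) (b - δ/(2*K+1)) with hcdef
    have hc0 : 0 < c := lt_max_of_lt_left (by linarith)
    have hcb : c < b := by
      apply max_lt (by linarith)
      have : 0 < δ/(2*K+1) := div_pos hδ0 h2K1
      linarith
    have hcIcc : c ∈ Icc 0 c₁ := ⟨hc0.le, by linarith⟩
    have hbIcc : b ∈ Icc 0 c₁ := ⟨hb0.le, hbc⟩
    have hgap : b - c ≤ δ/(2*K+1) := by
      have := le_max_right (b/2) (b - δ/(2*K+1))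
      rw [hcdef]; linarith [this]
    have l1 := hKlip σ b c hbIcc hcIcc
    have l2 := hKlip ω b c hbIcc hcIcc
    rw [abs_of_nonneg (by linarith : (0:ℝ) ≤ b - c)] at l1 l2
    have e1 : piU b σ - piU c σ ≤ K*(b-c) := (abs_le.mp l1).2
    have e2 : -(K*(b-c)) ≤ piU b ω - piU c ω := (abs_le.mp l2).1
    have hcc := h c hc0 hcb
    have hfin : K*(b-c) ≤ K*(δ/(2*K+1)) := mul_le_mul_of_nonneg_left hgap hK0
    have hlast : 2*(K*(δ/(2*K+1))) < δ := by
      have e3 : 2*(K*(δ/(2*K+1))) = (2*K*δ)/(2*K+1) := by ring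
      rw [e3, div_lt_iff₀ h2K1]
      nlinarith
    have : piU b σ - piU b ω < δ := by linarith
    rw [hδdef] at this; linarith
  -- positivity of the gap below r
  have hD : ∀ b : ℝ, 0 < b → b < r → piU b α < piU b β := by
    intro b hb0 hbr
    by_cases hbh : b < 1/2
    · exact hcrude b hb0 hbh α β hαβ
    · push_neg at hbh
      by_contra hcon
      push_neg at hcon
      set φ : ℝ → ℝ := fun c => piU c β - piU c α with hφdef
      have hφlip : LipschitzOnWith (Real.toNNReal (2*K)) φ (Icc 0 c₁) := by
        apply LipschitzOnWith.of_dist_le_mul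
        intro u hu v hv
        have l1 := hKlip β u v hu hv
        have l2 := hKlip α u v hu hv
        rw [Real.dist_eq, Real.dist_eq, Real.coe_toNNReal _ (by linarith : (0:ℝ) ≤ 2*K)]
        have e : φ u - φ v = (piU u β - piU v β) - (piU u α - piU v α) := by
          rw [hφdef]; ring
        rw [e, sub_eq_add_neg]
        refine le_trans (abs_add_le _ _) ?_
        rw [abs_neg]
        linarith
      have hφc : ContinuousOn φ (Icc (1/4 : ℝ) b) :=
        (hφlip.continuousOn).mono (Icc_subset_Icc (by norm_num) (by linarith))
      have hquarter : (1/4 : ℝ) ≤ b := by linarith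
      have hsub := intermediate_value_Icc' hquarter hφc
      have h14 : 0 < φ (1/4) := by
        have := hcrude (1/4) (by norm_num) (by norm_num) α β hαβ
        rw [hφdef]; simp only; linarith
      have h0mem : (0:ℝ) ∈ Icc (φ b) (φ (1/4)) := by
        constructor
        · rw [hφdef]; simp only; linarith
        · exact h14.le
      obtain ⟨c', hc'mem, hc'0⟩ := hsub h0mem
      have heq : piU c' α = piU c' β := by
        have : piU c' β - piU c' α = 0 := hc'0
        linarith
      have : r ≤ c' := hrmin c' (by linarith [hc'mem.1]) (by linarith [hc'mem.2]) heq
      linarith [hc'mem.2]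
  -- key step: any failure of strict monotonicity forces the parameter ≥ r
  have hkey : ∀ b : ℝ, 0 < b → b < 1 →
      (∃ σ ω, Adm σ ∧ Adm ω ∧ lexLt σ ω ∧ piU b ω ≤ piU b σ) → r ≤ b := by
    intro b hb0 hb1 hbad
    by_contra hbr
    push_neg at hbr
    set Bad : Set ℝ :=
      {c | 0 < c ∧ c < 1 ∧ ∃ σ ω, Adm σ ∧ Adm ω ∧ lexLt σ ω ∧ piU c ω ≤ piU c σ} with hBaddef
    have hbBad : b ∈ Bad := ⟨hb0, hb1, hbad⟩
    have hhalf : ∀ c ∈ Bad, 1/2 ≤ c := by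
      rintro c ⟨hc0, hc1, σ, ω, _, _, hlt, hle⟩
      by_contra hch
      push_neg at hch
      exact absurd hle (not_le.mpr (hcrude c hc0 hch σ ω hlt))
    have hbdd : BddBelow Bad := ⟨1/2, hhalf⟩
    set bs := sInf Bad with hbsdef
    have hbs_half : (1:ℝ)/2 ≤ bs := le_csInf ⟨b, hbBad⟩ hhalf
    have hbs_le : bs ≤ b := csInf_le hbdd hbBad
    have hbs0 : 0 < bs := by linarith
    have hbsr : bs < r := lt_of_le_of_lt hbs_le hbr
    have hbsc₁ : bs ≤ c₁ := by linarith
    have hmono : ∀ σ ω, Adm σ → Adm ω → lexLe σ ω → piU bs σ ≤ piU bs ω := by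
      intro σ ω hσ hω hle
      rcases hle with hlt | heq
      · apply hleft σ ω bs hbs0 hbsc₁
        intro c hc0 hcb
        have hcBad : c ∉ Bad := fun hc => absurd (csInf_le hbdd hc) (not_le.mpr hcb)
        by_contra hcon2
        push_neg at hcon2
        exact hcBad ⟨hc0, by linarith, σ, ω, hσ, hω, hlt, hcon2.le⟩
      · rw [heq]
    set Ds := piU bs β - piU bs α with hDsdef
    have hDs0 : 0 < Ds := by
      have := hD bs hbs0 hbsr
      rw [hDsdef]; linarith
    have h4K2 : (0:ℝ) < 4*K+2 := by linarith
    set ε0 := min (Ds / (4*K+2)) ((1-r)/2) with hε0def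
    have hε0pos : 0 < ε0 := lt_min (div_pos hDs0 h4K2) (by linarith)
    obtain ⟨b', hb'Bad, hb'lt⟩ :=
      exists_lt_of_csInf_lt ⟨b, hbBad⟩ (lt_add_of_pos_right bs hε0pos)
    have hb'ge : bs ≤ b' := csInf_le hbdd hb'Bad
    have hb'c₁ : b' ≤ c₁ := by
      have h5 := min_le_right (Ds/(4*K+2)) ((1-r)/2)
      have : b' < r + (1-r)/2 := by linarith
      rw [hc₁def]; linarith
    obtain ⟨hb'0, hb'1, σ, ω, hσ, hω, hlt, hle⟩ := hb'Bad
    obtain ⟨k, hagree, hklt⟩ := hlt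
    obtain ⟨hkσ, hkω⟩ := Bool.lt_iff.mp hklt
    have hdiff := piU_diff hb'0.le hb'1 σ ω k hagree
    have h1 : piU b' (shiftn k ω) ≤ piU b' (shiftn k σ) := by
      by_contra hcon3
      push_neg at hcon3
      have hpk : 0 < b'^k := pow_pos hb'0 k
      nlinarith
    have hAσs : Adm (shiftn k σ) := hAdmshift σ hσ k
    have hAωs : Adm (shiftn k ω) := hAdmshift ω hω k
    have ht0 : lexLe (shiftn k σ) α := htail0 σ hσ k hkσ
    have ht1 : lexLe β (shiftn k ω) := htail1 ω hω k hkω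
    have hbsIcc : bs ∈ Icc 0 c₁ := ⟨hbs0.le, hbsc₁⟩
    have hb'Icc : b' ∈ Icc 0 c₁ := ⟨hb'0.le, hb'c₁⟩
    have l1 := hKlip (shiftn k ω) b' bs hb'Icc hbsIcc
    have l2 := hKlip (shiftn k σ) b' bs hb'Icc hbsIcc
    have habs' : |b' - bs| ≤ ε0 := by
      rw [abs_of_nonneg (by linarith)]; linarith
    have c1 : |piU b' (shiftn k ω) - piU bs (shiftn k ω)| ≤ K * ε0 :=
      le_trans l1 (mul_le_mul_of_nonneg_left habs' hK0)
    have c2 : |piU b' (shiftn k σ) - piU bs (shiftn k σ)| ≤ K * ε0 :=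
      le_trans l2 (mul_le_mul_of_nonneg_left habs' hK0)
    have m1 : piU bs β ≤ piU bs (shiftn k ω) := hmono β (shiftn k ω) hAdmβ hAωs ht1
    have m2 : piU bs (shiftn k σ) ≤ piU bs α := hmono (shiftn k σ) α hAσs hAdmα ht0
    have a1 := (abs_le.mp c1).1
    have a2 := (abs_le.mp c2).2
    have hε0le : ε0 ≤ Ds/(4*K+2) := min_le_left _ _
    have hKε : K * ε0 ≤ K * (Ds/(4*K+2)) := mul_le_mul_of_nonneg_left hε0le hK0
    have hfrac : 2*(K * (Ds/(4*K+2))) < Ds := by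
      have e3 : 2*(K*(Ds/(4*K+2))) = (2*K*Ds)/(4*K+2) := by ring
      rw [e3, div_lt_iff₀ h4K2]
      nlinarith
    have hDs_eq : Ds ≤ piU bs (shiftn k ω) - piU bs (shiftn k σ) := by
      rw [hDsdef]; linarith
    linarith
  -- conclusions
  constructor
  · intro a ha0 har σ hσ ω hω hlt
    by_contra hcon
    push_neg at hcon
    have := hkey a ha0 (har.trans hr1) ⟨σ, ω, hmemAdm σ hσ, hmemAdm ω hω, hlt, hcon⟩
    linarith
  · intro σ hσ ω hω hle
    rcases hle with hlt | heq
    · apply hleft σ ω r hr0 hrc₁.le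
      intro c hc0 hcr
      by_contra hcon
      push_neg at hcon
      have := hkey c hc0 (hcr.trans hr1) ⟨σ, ω, hmemAdm σ hσ, hmemAdm ω hω, hlt, hcon.le⟩
      linarith
    · rw [heq]
end
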